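/- arXiv:math/0612603 — 7 statements merged into one kernel-verified Lean document; each statement's English description precedes it below -/
import Mathlib

section
/- The map q ↦ (γ_i(q)) sending q to its greedy q-expansion is a strictly increasing bijection between the set 𝒰 of univoque numbers and the set of all sequences (γ_i)_{i≥1} of nonnegative integers satisfying: (a) γ_{j+1} γ_{j+2} … < γ_1 γ_2 … lexicographically for all j ≥ 1, and (b) (γ_1 − γ_{j+1})(γ_1 − γ_{j+2}) … < γ_1 γ_2 … lexicographically for all j ≥ 1. -/
/-- `c` is a `q`-expansion: a sequence of nonnegative integers with `c i ≤ q`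
(we index from 0, so `c i` stands for the digit `c_{i+1}` of the paper)
such that `∑_{i≥1} c_i q^{-i} = 1`. -/
def IsExpansion (q : ℝ) (c : ℕ → ℕ) : Prop :=
  (∀ i, (c i : ℝ) ≤ q) ∧ ∑' i : ℕ, (c i : ℝ) / q ^ (i + 1) = 1

/-- The set `𝒰` of univoque numbers: real numbers `q ≥ 1` admitting exactly one
`q`-expansion. -/
def UnivoqueSet : Set ℝ := {q | 1 ≤ q ∧ ∃! c : ℕ → ℕ, IsExpansion q c}

/-- `γ` is the greedy `q`-expansion: for every `n`, `γ n` is the largest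
nonnegative integer `k` such that `(∑_{i<n} γ i / q^(i+1)) + k / q^(n+1) ≤ 1`. -/
def IsGreedy (q : ℝ) (γ : ℕ → ℕ) : Prop :=
  ∀ n : ℕ, IsGreatest
    {k : ℕ | (∑ i ∈ Finset.range n, (γ i : ℝ) / q ^ (i + 1)) + (k : ℝ) / q ^ (n + 1) ≤ 1} (γ n)

/-- `α` is the quasi-greedy `q`-expansion: for every `n`, `α n` is the largest
nonnegative integer `k` such that `(∑_{i<n} α i / q^(i+1)) + k / q^(n+1) < 1`. -/
def IsQuasiGreedy (q : ℝ) (α : ℕ → ℕ) : Prop :=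
  ∀ n : ℕ, IsGreatest
    {k : ℕ | (∑ i ∈ Finset.range n, (α i : ℝ) / q ^ (i + 1)) + (k : ℝ) / q ^ (n + 1) < 1} (α n)

/-- Strict lexicographic order on sequences of nonnegative integers. -/
def LexLT (a b : ℕ → ℕ) : Prop := ∃ n : ℕ, (∀ i < n, a i = b i) ∧ a n < b n

/-- Lexicographic order on sequences of nonnegative integers. -/
def LexLE (a b : ℕ → ℕ) : Prop := LexLT a b ∨ a = b

/-- Strict lexicographic order on finite words of length `n`
(given as functions on the first `n` indices). -/
def WordLT (n : ℕ) (a b : ℕ → ℕ) : Prop := ∃ i < n, (∀ j < i, a j = b j) ∧ a i < b i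

noncomputable def vv (q : ℝ) (a : ℕ → ℕ) : ℝ := ∑' i : ℕ, (a i : ℝ) / q ^ (i + 1)

lemma summable_geom_aux {q : ℝ} (hq : 1 < q) : Summable (fun i : ℕ => (1/q) ^ (i+1)) := by
  have h : (1/q) < 1 := by
    rw [div_lt_one (by linarith)]; linarith
  have h0 : (0:ℝ) ≤ 1/q := by positivity
  exact ((summable_geometric_of_lt_one h0 h).mul_left (1/q)).congr (by
    intro i; rw [pow_succ]; ring)

lemma tsum_geom_aux {q : ℝ} (hq : 1 < q) : ∑' i : ℕ, (1/q) ^ (i+1) = 1/(q-1) := by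
  have h : (1/q) < 1 := by rw [div_lt_one (by linarith)]; linarith
  have h0 : (0:ℝ) ≤ 1/q := by positivity
  have ht := tsum_geometric_of_lt_one h0 h
  have hqne : q ≠ 0 := by linarith
  have hq1 : q - 1 ≠ 0 := by intro h'; linarith
  calc ∑' i : ℕ, (1/q) ^ (i+1) = ∑' i : ℕ, (1/q) * (1/q) ^ i := by
        congr 1; funext i; rw [pow_succ]; ring
    _ = (1/q) * (1 - 1/q)⁻¹ := by rw [tsum_mul_left, ht]
    _ = 1/(q-1) := by field_simp

lemma summable_digits {q : ℝ} (hq : 1 < q) {a : ℕ → ℕ} {B : ℕ} (hB : ∀ i, a i ≤ B) :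
    Summable (fun i : ℕ => (a i : ℝ) / q ^ (i + 1)) := by
  have h1 : ∀ i : ℕ, (0:ℝ) ≤ (a i : ℝ) / q ^ (i+1) := fun i => by positivity
  have h2 : ∀ i : ℕ, (a i : ℝ) / q ^ (i+1) ≤ (B:ℝ) * (1/q)^(i+1) := by
    intro i
    have hc : ((a i : ℝ)) ≤ (B : ℝ) := by exact_mod_cast hB i
    rw [one_div, inv_pow, ← div_eq_mul_inv]
    gcongr
  exact Summable.of_nonneg_of_le h1 h2 ((summable_geom_aux hq).mul_left _)

lemma vv_le_bound {q : ℝ} (hq : 1 < q) {a : ℕ → ℕ} {B : ℕ} (hB : ∀ i, a i ≤ B) :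
    vv q a ≤ (B:ℝ) / (q - 1) := by
  have h2 : ∀ i : ℕ, (a i : ℝ) / q ^ (i+1) ≤ (B:ℝ) * (1/q)^(i+1) := by
    intro i
    have hc : ((a i : ℝ)) ≤ (B : ℝ) := by exact_mod_cast hB i
    rw [one_div, inv_pow, ← div_eq_mul_inv]
    gcongr
  calc vv q a ≤ ∑' i : ℕ, (B:ℝ) * (1/q)^(i+1) :=
        Summable.tsum_le_tsum h2 (summable_digits hq hB) ((summable_geom_aux hq).mul_left _)
    _ = (B:ℝ) * (1/(q-1)) := by rw [tsum_mul_left, tsum_geom_aux hq]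
    _ = (B:ℝ) / (q-1) := by ring

lemma vv_nonneg {q : ℝ} (hq : 0 < q) (a : ℕ → ℕ) : 0 ≤ vv q a :=
  tsum_nonneg (fun i => by positivity)

lemma lex_trichotomy (a b : ℕ → ℕ) : LexLT a b ∨ a = b ∨ LexLT b a := by
  by_cases hab : a = b
  · exact Or.inr (Or.inl hab)
  · have hex : ∃ n, a n ≠ b n := by
      by_contra h
      push_neg at h
      exact hab (funext h)
    classical
    let n := Nat.find hex
    have hn : a n ≠ b n := Nat.find_spec hex
    have hlt : ∀ i < n, a i = b i := fun i hi => by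
      by_contra h
      exact absurd hi (not_lt.mpr (Nat.find_le h))
    rcases lt_or_gt_of_ne hn with h | h
    · exact Or.inl ⟨n, hlt, h⟩
    · exact Or.inr (Or.inr ⟨n, fun i hi => (hlt i hi).symm, h⟩)

lemma lexLT_irrefl (a : ℕ → ℕ) : ¬ LexLT a a := by
  rintro ⟨n, _, h⟩; exact lt_irrefl _ h

lemma vv_split {q : ℝ} {a : ℕ → ℕ}
    (hs : Summable (fun i : ℕ => (a i : ℝ) / q ^ (i + 1))) (n : ℕ) :
    vv q a = (∑ i ∈ Finset.range n, (a i : ℝ) / q ^ (i + 1))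
      + (vv q (fun i => a (i + n))) / q ^ n := by
  rw [vv, ← Summable.sum_add_tsum_nat_add n hs]
  congr 1
  rw [vv, ← tsum_div_const]
  apply tsum_congr
  intro i
  have : q ^ (i + n + 1) = q ^ (i + 1) * q ^ n := by ring
  rw [this, div_div]

section Greedy

variable {q : ℝ} {γ : ℕ → ℕ} (hq : 1 ≤ q) (hγ : IsGreedy q γ)

include hγ

lemma g_mem (n : ℕ) :
    (∑ i ∈ Finset.range n, (γ i : ℝ) / q ^ (i + 1)) + (γ n : ℝ) / q ^ (n + 1) ≤ 1 := (hγ n).1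

lemma g_ub (n : ℕ) :
    1 < (∑ i ∈ Finset.range n, (γ i : ℝ) / q ^ (i + 1)) + ((γ n : ℝ) + 1) / q ^ (n + 1) := by
  by_contra h
  push_neg at h
  have hmem : (γ n + 1 : ℕ) ∈
      {k : ℕ | (∑ i ∈ Finset.range n, (γ i : ℝ) / q ^ (i + 1)) + (k : ℝ) / q ^ (n + 1) ≤ 1} := by
    simpa using h
  have := (hγ n).2 hmem
  omega

lemma g_P_le_one (n : ℕ) : (∑ i ∈ Finset.range n, (γ i : ℝ) / q ^ (i + 1)) ≤ 1 := by
  induction n with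
  | zero => simp
  | succ m _ =>
    rw [Finset.sum_range_succ]
    exact g_mem hγ m

lemma g_rem_lt (n : ℕ) :
    1 - (∑ i ∈ Finset.range (n+1), (γ i : ℝ) / q ^ (i + 1)) < 1 / q ^ (n + 1) := by
  have h := g_ub hγ n
  rw [Finset.sum_range_succ]
  have he : ((γ n : ℝ) + 1) / q ^ (n+1) = (γ n : ℝ)/q^(n+1) + 1/q^(n+1) := by ring
  rw [he] at h
  linarith

lemma g_digit_lt (hq : 1 ≤ q) (n : ℕ) : (γ (n+1) : ℝ) < q := by
  have hmem := g_mem hγ (n+1)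
  have hrem := g_rem_lt hγ n
  rw [Finset.sum_range_succ] at hrem
  rw [Finset.sum_range_succ] at hmem
  have hq0 : 0 < q := by linarith
  have h1 : (γ (n+1) : ℝ) / q ^ (n+1+1) < 1 / q^(n+1) := by linarith
  rw [div_lt_div_iff₀ (by positivity) (by positivity)] at h1
  have he : q ^ (n+1+1) = q^(n+1) * q := by ring
  rw [he] at h1
  have h2 : (0:ℝ) < q ^ (n+1) := by positivity
  nlinarith

lemma g_digit0_le (hq0 : 0 < q) : (γ 0 : ℝ) ≤ q := by
  have hmem := g_mem hγ 0
  simp only [Finset.range_zero, Finset.sum_empty, zero_add, pow_one] at hmem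
  rwa [div_le_one hq0] at hmem

lemma g_digit0_eq_floor (hq : 1 ≤ q) : γ 0 = ⌊q⌋₊ := by
  have hq0 : (0:ℝ) < q := by linarith
  have h1 : γ 0 ≤ ⌊q⌋₊ := Nat.le_floor (g_digit0_le hγ hq0)
  have h2 : ⌊q⌋₊ ≤ γ 0 := by
    apply (hγ 0).2
    simp only [Set.mem_setOf_eq, Finset.range_zero, Finset.sum_empty, zero_add, pow_one]
    rw [div_le_one hq0]
    exact Nat.floor_le (le_of_lt hq0)
  omega

lemma g_digit_le0 (hq : 1 ≤ q) (n : ℕ) : γ n ≤ γ 0 := by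
  cases n with
  | zero => exact le_refl _
  | succ m =>
    rw [g_digit0_eq_floor hγ hq]
    by_contra h
    push_neg at h
    have h2 : (⌊q⌋₊ : ℝ) + 1 ≤ (γ (m+1) : ℝ) := by exact_mod_cast h
    have h3 := g_digit_lt hγ hq m
    have h4 := Nat.lt_floor_add_one q
    linarith

end Greedy

section Greedy2

variable {q : ℝ} {γ : ℕ → ℕ} (hq : 1 < q) (hγ : IsGreedy q γ)

include hq hγ

lemma g_tendsto :
    Filter.Tendsto (fun n => ∑ i ∈ Finset.range n, (γ i : ℝ) / q ^ (i + 1))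
      Filter.atTop (nhds 1) := by
  have hq1 : 1 ≤ q := le_of_lt hq
  have hb : ∀ n : ℕ, 1 - (∑ i ∈ Finset.range n, (γ i : ℝ) / q ^ (i + 1)) ≤ q * (1/q)^n := by
    intro n
    cases n with
    | zero => simpa using hq1
    | succ m =>
      have h1 := g_rem_lt hγ m
      have h2 : (1/q)^(m+1) = 1/q^(m+1) := by rw [one_div, one_div, inv_pow]
      nlinarith [pow_pos (show (0:ℝ) < 1/q by positivity) (m+1)]
  have h0 : ∀ n : ℕ, 0 ≤ 1 - (∑ i ∈ Finset.range n, (γ i : ℝ) / q ^ (i + 1)) := by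
    intro n; linarith [g_P_le_one hγ n]
  have hgeo : Filter.Tendsto (fun n : ℕ => q * (1/q)^n) Filter.atTop (nhds 0) := by
    have := (tendsto_pow_atTop_nhds_zero_of_lt_one
      (show (0:ℝ) ≤ 1/q by positivity)
      (by rw [div_lt_one (by linarith)]; linarith)).const_mul q
    simpa using this
  have hsq := squeeze_zero h0 hb hgeo
  have := Filter.Tendsto.const_sub (1:ℝ) hsq
  simpa using this

lemma g_hasSum : HasSum (fun i : ℕ => (γ i : ℝ) / q ^ (i + 1)) 1 :=
  (hasSum_iff_tendsto_nat_of_nonneg (fun i => by positivity) 1).mpr (g_tendsto hq hγ)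

lemma g_vv_one : vv q γ = 1 := (g_hasSum hq hγ).tsum_eq

lemma g_summable : Summable (fun i : ℕ => (γ i : ℝ) / q ^ (i + 1)) := (g_hasSum hq hγ).summable

lemma g_vv_shift (n : ℕ) :
    vv q (fun i => γ (i + n)) =
      q ^ n * (1 - ∑ i ∈ Finset.range n, (γ i : ℝ) / q ^ (i + 1)) := by
  have h := vv_split (a := γ) (g_summable hq hγ) n
  rw [g_vv_one hq hγ] at h
  have hqn : (0:ℝ) < q ^ n := by positivity
  field_simp at h ⊢
  linarith

lemma g_vv_shift_lt (n : ℕ) : vv q (fun i => γ (i + (n+1))) < 1 := by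
  rw [g_vv_shift hq hγ (n+1)]
  have h := g_rem_lt hγ n
  have hqn : (0:ℝ) < q ^ (n+1) := by positivity
  calc q ^ (n+1) * (1 - ∑ i ∈ Finset.range (n+1), (γ i : ℝ) / q ^ (i + 1))
      < q ^ (n+1) * (1/q^(n+1)) := by exact mul_lt_mul_of_pos_left h hqn
    _ = 1 := by field_simp

end Greedy2

lemma compare_ge {q : ℝ} (hq : 1 < q) {γ a : ℕ → ℕ} (hγ : IsGreedy q γ)
    {B : ℕ} (hB : ∀ i, a i ≤ B) (h : ¬ LexLT a γ) : 1 ≤ vv q a := by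
  rcases lex_trichotomy a γ with hlt | heq | hgt
  · exact absurd hlt h
  · rw [heq]; exact le_of_eq (g_vv_one hq hγ).symm
  · obtain ⟨n, heqn, hn⟩ := hgt
    have hsum : Summable (fun i : ℕ => (a i : ℝ) / q ^ (i + 1)) := summable_digits hq hB
    have h1 : (∑ i ∈ Finset.range (n+1), (a i : ℝ) / q ^ (i + 1)) ≤ vv q a :=
      Summable.sum_le_tsum _ (fun i _ => by positivity) hsum
    rw [Finset.sum_range_succ] at h1
    have h2 : (∑ i ∈ Finset.range n, (a i : ℝ) / q ^ (i + 1))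
        = ∑ i ∈ Finset.range n, (γ i : ℝ) / q ^ (i + 1) := by
      apply Finset.sum_congr rfl
      intro i hi
      rw [heqn i (Finset.mem_range.mp hi)]
    have h3 : ((γ n : ℝ) + 1) ≤ (a n : ℝ) := by exact_mod_cast hn
    have h4 := g_ub hγ n
    have h5 : ((γ n : ℝ) + 1) / q ^ (n+1) ≤ (a n : ℝ) / q ^ (n+1) := by gcongr
    rw [h2] at h1
    linarith

lemma key_ineq {q : ℝ} (hq : 1 < q) {γ a : ℕ → ℕ} {B : ℕ}
    (hγB : ∀ i, γ i ≤ B) (haB : ∀ i, a i ≤ B) (hsum1 : vv q γ = 1)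
    {m : ℕ} (heq : ∀ i < m, a i = γ i) (hm : a m < γ m) :
    vv q a ≤ 1 - (vv q (fun i => γ (i + (m+1))))/q^(m+1) - 1/q^(m+1)
      + (vv q (fun i => a (i + (m+1))))/q^(m+1) := by
  have hsa := summable_digits hq haB
  have hsγ := summable_digits hq hγB
  have h1 := vv_split (a := a) hsa (m+1)
  have h2 := vv_split (a := γ) hsγ (m+1)
  rw [hsum1] at h2
  rw [Finset.sum_range_succ] at h1 h2
  have h3 : (∑ i ∈ Finset.range m, (a i : ℝ) / q ^ (i + 1))
      = ∑ i ∈ Finset.range m, (γ i : ℝ) / q ^ (i + 1) := by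
    apply Finset.sum_congr rfl
    intro i hi; rw [heq i (Finset.mem_range.mp hi)]
  have h4 : (a m : ℝ) ≤ (γ m : ℝ) - 1 := by
    have : a m + 1 ≤ γ m := hm
    have := (Nat.cast_le (α := ℝ)).mpr this
    push_cast at this
    linarith
  have h5 : (a m : ℝ)/q^(m+1) ≤ ((γ m : ℝ) - 1)/q^(m+1) := by gcongr
  have h6 : ((γ m : ℝ) - 1)/q^(m+1) = (γ m : ℝ)/q^(m+1) - 1/q^(m+1) := by ring
  rw [h1, h3]
  linarith [h2, h5, h6 ▸ h5]

lemma family_lt_one {q : ℝ} (hq : 1 < q) {γ : ℕ → ℕ} {B : ℕ}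
    (hγB : ∀ i, γ i ≤ B) (hsum1 : vv q γ = 1)
    (hinf : ∀ N : ℕ, ∃ k, N ≤ k ∧ γ k ≠ 0)
    (A : Set (ℕ → ℕ))
    (hAlex : ∀ a ∈ A, LexLT a γ)
    (hAB : ∀ a ∈ A, ∀ i, a i ≤ B)
    (hAshift : ∀ a ∈ A, ∀ m : ℕ, (fun i => a (i + (m+1))) ∈ A) :
    ∀ a ∈ A, vv q a < 1 := by
  intro a₀ ha₀
  have hqpos : (0:ℝ) < q := by linarith
  -- t m := vv of shift of γ is nonneg and positive
  have htpos : ∀ m : ℕ, 0 < vv q (fun i => γ (i + (m+1))) := by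
    intro m
    obtain ⟨k, hk, hk0⟩ := hinf (m+1)
    have hsh : Summable (fun i : ℕ => ((γ (i + (m+1)) : ℝ)) / q ^ (i + 1)) :=
      summable_digits hq (fun i => hγB _)
    have hterm : (0:ℝ) < (γ ((k - (m+1)) + (m+1)) : ℝ) / q ^ ((k - (m+1)) + 1) := by
      have : (k - (m+1)) + (m+1) = k := by omega
      rw [this]
      have : 1 ≤ γ k := Nat.one_le_iff_ne_zero.mpr hk0
      have h1 : (1:ℝ) ≤ (γ k : ℝ) := by exact_mod_cast this
      positivity
    calc (0:ℝ) < (γ ((k - (m+1)) + (m+1)) : ℝ) / q ^ ((k - (m+1)) + 1) := hterm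
      _ ≤ vv q (fun i => γ (i + (m+1))) := Summable.le_tsum hsh _ (fun j _ => by positivity)
  -- the sup
  set S := sSup (vv q '' A) with hS
  have hbdd : BddAbove (vv q '' A) := by
    refine ⟨(B:ℝ)/(q-1), ?_⟩
    rintro x ⟨a, ha, rfl⟩
    exact vv_le_bound hq (hAB a ha)
  have hne : (vv q '' A).Nonempty := ⟨vv q a₀, Set.mem_image_of_mem _ ha₀⟩
  have hleS : ∀ a ∈ A, vv q a ≤ S := fun a ha => le_csSup hbdd (Set.mem_image_of_mem _ ha)
  -- step 1 : S ≤ 1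
  have hS1 : S ≤ 1 := by
    by_contra hcon
    push_neg at hcon
    have hkey : ∀ a ∈ A, vv q a ≤ 1 + (S - 1)/q := by
      intro a ha
      obtain ⟨m, heq, hm⟩ := hAlex a ha
      have h := key_ineq hq hγB (hAB a ha) hsum1 heq hm
      have ht := (htpos m).le
      have hsh := hleS _ (hAshift a ha m)
      have hqm : (0:ℝ) < q^(m+1) := by positivity
      have : vv q a ≤ 1 - 1/q^(m+1) + S/q^(m+1) := by
        have h7 : (vv q (fun i => a (i + (m+1))))/q^(m+1) ≤ S/q^(m+1) := by gcongr
        have h8 : 0 ≤ (vv q (fun i => γ (i + (m+1))))/q^(m+1) := by positivity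
        linarith
      have h9 : 1 - 1/q^(m+1) + S/q^(m+1) = 1 + (S-1)/q^(m+1) := by ring
      rw [h9] at this
      have h10 : (S-1)/q^(m+1) ≤ (S-1)/q := by
        rw [div_le_div_iff₀ hqm hqpos]
        have : q ≤ q^(m+1) := by
          calc q = q^1 := (pow_one q).symm
            _ ≤ q^(m+1) := by exact pow_le_pow_right₀ (by linarith) (by omega)
        nlinarith
      linarith
    have hSle : S ≤ 1 + (S - 1)/q := by
      apply csSup_le hne
      rintro x ⟨a, ha, rfl⟩
      exact hkey a ha
    have h11 : (S-1)/q * q = S - 1 := div_mul_cancel₀ _ (ne_of_gt hqpos)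
    nlinarith [mul_le_mul_of_nonneg_right hSle hqpos.le, h11, hcon, hq]
  -- step 2 : strict
  obtain ⟨m, heq, hm⟩ := hAlex a₀ ha₀
  have h := key_ineq hq hγB (hAB a₀ ha₀) hsum1 heq hm
  have ht := htpos m
  have hsh : vv q (fun i => a₀ (i + (m+1))) ≤ 1 := le_trans (hleS _ (hAshift a₀ ha₀ m)) hS1
  have hqm : (0:ℝ) < q^(m+1) := by positivity
  have h7 : (vv q (fun i => a₀ (i + (m+1))))/q^(m+1) ≤ 1/q^(m+1) := by gcongr
  have h8 : 0 < (vv q (fun i => γ (i + (m+1))))/q^(m+1) := by positivity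
  linarith

noncomputable def fillRem (q : ℝ) (M : ℕ) (r : ℝ) : ℕ → ℝ
  | 0 => r
  | (k+1) => fillRem q M r k - (min M ⌊fillRem q M r k * q^(k+1)⌋₊ : ℕ)/q^(k+1)

noncomputable def fillDig (q : ℝ) (M : ℕ) (r : ℝ) (k : ℕ) : ℕ :=
  min M ⌊fillRem q M r k * q^(k+1)⌋₊

lemma fill_lemma {q : ℝ} (hq : 1 < q) {M : ℕ} (hqM : q ≤ (M:ℝ) + 1)
    {r : ℝ} (hr0 : 0 ≤ r) (hr1 : r ≤ (M:ℝ)/(q-1)) :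
    ∃ d : ℕ → ℕ, (∀ k, d k ≤ M) ∧ HasSum (fun k : ℕ => (d k : ℝ)/q^(k+1)) r := by
  have hq0 : (0:ℝ) < q := by linarith
  have hq1 : (0:ℝ) < q - 1 := by linarith
  have hMge : (1:ℝ) ≤ (M:ℝ)/(q-1) := by
    rw [le_div_iff₀ hq1]; linarith
  set rem := fillRem q M r with hrem
  -- invariant
  have hinv : ∀ k : ℕ, 0 ≤ rem k ∧ rem k ≤ ((M:ℝ)/(q-1))/q^k := by
    intro k
    induction k with
    | zero => exact ⟨hr0, by show r ≤ ((M:ℝ)/(q-1))/q^0; simpa using hr1⟩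
    | succ k ih =>
      obtain ⟨h0, h1⟩ := ih
      have hqk : (0:ℝ) < q^(k+1) := by positivity
      have hrecur : rem (k+1) = rem k - (min M ⌊rem k * q^(k+1)⌋₊ : ℕ)/q^(k+1) := rfl
      by_cases hc : M ≤ ⌊rem k * q^(k+1)⌋₊
      · have hd : min M ⌊rem k * q^(k+1)⌋₊ = M := min_eq_left hc
        rw [hrecur, hd]
        have hfl : ((M:ℕ):ℝ) ≤ rem k * q^(k+1) := by
          calc ((M:ℕ):ℝ) ≤ (⌊rem k * q^(k+1)⌋₊ : ℝ) := by exact_mod_cast hc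
            _ ≤ rem k * q^(k+1) := Nat.floor_le (by positivity)
        constructor
        · rw [sub_nonneg, div_le_iff₀ hqk]; linarith
        · have : ((M:ℝ)/(q-1))/q^k - (M:ℝ)/q^(k+1) = ((M:ℝ)/(q-1))/q^(k+1) := by
            field_simp
            ring
          linarith [this]
      · push_neg at hc
        have hd : min M ⌊rem k * q^(k+1)⌋₊ = ⌊rem k * q^(k+1)⌋₊ := min_eq_right (le_of_lt hc)
        rw [hrecur, hd]
        have hfl : ((⌊rem k * q^(k+1)⌋₊ : ℕ):ℝ) ≤ rem k * q^(k+1) := Nat.floor_le (by positivity)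
        have hfl2 : rem k * q^(k+1) < (⌊rem k * q^(k+1)⌋₊ : ℝ) + 1 := Nat.lt_floor_add_one _
        constructor
        · rw [sub_nonneg, div_le_iff₀ hqk]; linarith
        · have h2 : rem k - (⌊rem k * q^(k+1)⌋₊ : ℝ)/q^(k+1) < 1/q^(k+1) := by
            rw [sub_lt_iff_lt_add, ← add_div, lt_div_iff₀ hqk]
            linarith
          have h3 : (1:ℝ)/q^(k+1) ≤ ((M:ℝ)/(q-1))/q^(k+1) := by gcongr
          linarith
  refine ⟨fillDig q M r, fun k => min_le_left _ _, ?_⟩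
  rw [hasSum_iff_tendsto_nat_of_nonneg (fun i => by positivity)]
  -- partial sums equal r - rem n
  have hpart : ∀ n : ℕ, (∑ k ∈ Finset.range n, (fillDig q M r k : ℝ)/q^(k+1)) = r - rem n := by
    intro n
    induction n with
    | zero => simp [hrem, fillRem]
    | succ n ih =>
      rw [Finset.sum_range_succ, ih]
      have hrecur : rem (n+1) = rem n - (min M ⌊rem n * q^(n+1)⌋₊ : ℕ)/q^(n+1) := rfl
      rw [hrecur]
      simp [fillDig]
      ring
  have htend : Filter.Tendsto rem Filter.atTop (nhds 0) := by
    apply squeeze_zero (fun n => (hinv n).1) (fun n => (hinv n).2)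
    have : ∀ n : ℕ, ((M:ℝ)/(q-1))/q^n = ((M:ℝ)/(q-1)) * (1/q)^n := by
      intro n; rw [one_div, inv_pow, div_eq_mul_inv]
    rw [funext this]
    have := (tendsto_pow_atTop_nhds_zero_of_lt_one
      (show (0:ℝ) ≤ 1/q by positivity)
      (by rw [div_lt_one hq0]; linarith)).const_mul ((M:ℝ)/(q-1))
    simpa using this
  have : Filter.Tendsto (fun n => r - rem n) Filter.atTop (nhds r) := by
    have := Filter.Tendsto.const_sub r htend
    simpa using this
  exact (funext hpart) ▸ this

lemma one_not_univoque : (1:ℝ) ∉ UnivoqueSet := by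
  rintro ⟨-, c, hc, huniq⟩
  have h1 : IsExpansion 1 (fun i => if i = 0 then 1 else 0) := by
    constructor
    · intro i; by_cases h : i = 0 <;> simp [h]
    · have : (fun i : ℕ => ((if i = 0 then 1 else 0 : ℕ) : ℝ) / 1 ^ (i + 1))
          = fun i : ℕ => if i = 0 then (1:ℝ) else 0 := by
        funext i; by_cases h : i = 0 <;> simp [h]
      rw [this, tsum_ite_eq]
  have h2 : IsExpansion 1 (fun i => if i = 1 then 1 else 0) := by
    constructor
    · intro i; by_cases h : i = 1 <;> simp [h]
    · have : (fun i : ℕ => ((if i = 1 then 1 else 0 : ℕ) : ℝ) / 1 ^ (i + 1))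
          = fun i : ℕ => if i = 1 then (1:ℝ) else 0 := by
        funext i; by_cases h : i = 1 <;> simp [h]
      rw [this, tsum_ite_eq]
  have e1 := huniq _ h1
  have e2 := huniq _ h2
  have : (fun i : ℕ => if i = 0 then 1 else 0) = (fun i : ℕ => if i = 1 then 1 else 0) := by
    rw [e1, e2]
  have := congrFun this 0
  simp at this

lemma univoque_gt_one {q : ℝ} (hq : q ∈ UnivoqueSet) : 1 < q := by
  rcases lt_or_eq_of_le hq.1 with h | h
  · exact h
  · exact absurd (h ▸ hq) one_not_univoque

lemma greedy_unique {q : ℝ} {γ δ : ℕ → ℕ} (hγ : IsGreedy q γ) (hδ : IsGreedy q δ) : γ = δ := by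
  funext n
  induction n using Nat.strong_induction_on with
  | _ n ih =>
    have hsum : (∑ i ∈ Finset.range n, (γ i : ℝ) / q ^ (i + 1))
        = ∑ i ∈ Finset.range n, (δ i : ℝ) / q ^ (i + 1) := by
      apply Finset.sum_congr rfl
      intro i hi; rw [ih i (Finset.mem_range.mp hi)]
    have h1 := hγ n
    have h2 := hδ n
    rw [hsum] at h1
    exact h1.unique h2

lemma greedy_mono {p q : ℝ} {γ δ : ℕ → ℕ} (hp : 1 < p) (hq : 1 < q) (hpq : p < q)
    (hγ : IsGreedy p γ) (hδ : IsGreedy q δ) : LexLT γ δ := by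
  rcases lex_trichotomy γ δ with h | h | h
  · exact h
  · exfalso
    subst h
    have h1 : vv p γ = 1 := g_vv_one hp hγ
    have h2 : vv q γ = 1 := g_vv_one hq hδ
    have hlt : vv q γ < vv p γ := by
      apply Summable.tsum_lt_tsum (i := 0)
      · intro i
        show (γ i : ℝ) / q ^ (i+1) ≤ (γ i : ℝ) / p ^ (i+1)
        gcongr
      · have h0 : 1 ≤ γ 0 := by
          have := g_digit0_eq_floor hγ (le_of_lt hp)
          rw [this]
          exact Nat.one_le_floor_iff p |>.mpr (le_of_lt hp)
        have h0r : (1:ℝ) ≤ (γ 0 : ℝ) := by exact_mod_cast h0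
        have hpow : (0:ℝ) < p ^ (0+1) := by positivity
        have hpow2 : p ^ (0+1) < q ^ (0+1) := by
          simp only [zero_add, pow_one]; exact hpq
        show (γ 0 : ℝ) / q ^ (0+1) < (γ 0 : ℝ) / p ^ (0+1)
        apply div_lt_div_of_pos_left (by linarith) hpow hpow2
      · exact summable_digits hq (fun i => g_digit_le0 hδ (le_of_lt hq) i)
      · exact summable_digits hp (fun i => g_digit_le0 hγ (le_of_lt hp) i)
    linarith
  · exfalso
    obtain ⟨n, heq, hn⟩ := h
    have h1 := g_mem hγ n
    have h2 := g_ub hδ n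
    have h3 : (∑ i ∈ Finset.range n, (δ i : ℝ) / q ^ (i + 1)) + ((δ n : ℝ) + 1) / q ^ (n + 1)
        ≤ (∑ i ∈ Finset.range n, (γ i : ℝ) / p ^ (i + 1)) + (γ n : ℝ) / p ^ (n + 1) := by
      apply add_le_add
      · apply Finset.sum_le_sum
        intro i _
        rw [heq i (by exact Finset.mem_range.mp ‹_›)]
        gcongr
      · have hc : ((δ n : ℝ) + 1) ≤ (γ n : ℝ) := by exact_mod_cast hn
        calc ((δ n : ℝ) + 1) / q ^ (n+1) ≤ ((δ n : ℝ) + 1) / p ^ (n+1) := by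
              gcongr
          _ ≤ (γ n : ℝ) / p ^ (n+1) := by gcongr
    linarith

lemma vv_split_one {q : ℝ} (hq : 1 < q) {a : ℕ → ℕ} {B : ℕ} (hB : ∀ i, a i ≤ B) :
    vv q a = (a 0 : ℝ)/q + vv q (fun i => a (i+1))/q := by
  have h := vv_split (a := a) (summable_digits hq hB) 1
  simpa using h

lemma vv_const_digit {q : ℝ} (hq : 1 < q) (M : ℕ) :
    vv q (fun _ => M) = (M:ℝ)/(q-1) := by
  rw [vv]
  have he : (fun i : ℕ => ((M:ℕ):ℝ) / q^(i+1)) = fun i : ℕ => (M:ℝ) * (1/q)^(i+1) := by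
    funext i
    rw [one_div, inv_pow, ← div_eq_mul_inv]
  rw [he, tsum_mul_left, tsum_geom_aux hq]
  ring

lemma vv_comp_eq {q : ℝ} (hq : 1 < q) {γ : ℕ → ℕ} (hB : ∀ i, γ i ≤ γ 0) (m : ℕ) :
    vv q (fun i => γ 0 - γ (i + m)) = (γ 0 : ℝ)/(q-1) - vv q (fun i => γ (i + m)) := by
  have hs1 : Summable (fun i : ℕ => ((γ 0 : ℕ):ℝ) / q^(i+1)) :=
    summable_digits hq (B := γ 0) (fun _ => le_refl _)
  have hs2 : Summable (fun i : ℕ => (γ (i+m) : ℝ) / q^(i+1)) :=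
    summable_digits hq (B := γ 0) (fun i => hB _)
  have he : (fun i : ℕ => ((γ 0 - γ (i + m) : ℕ):ℝ) / q^(i+1))
      = fun i : ℕ => ((γ 0:ℕ):ℝ)/q^(i+1) - (γ (i+m) : ℝ)/q^(i+1) := by
    funext i
    rw [Nat.cast_sub (hB _)]
    ring
  rw [vv, he, Summable.tsum_sub hs1 hs2]
  have : ∑' i : ℕ, ((γ 0:ℕ):ℝ)/q^(i+1) = vv q (fun _ => γ 0) := rfl
  rw [this, vv_const_digit hq]
  rfl

lemma forward_maps {q : ℝ} {γ : ℕ → ℕ} (hqU : q ∈ UnivoqueSet) (hγ : IsGreedy q γ) :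
    (∀ j : ℕ, 1 ≤ j → LexLT (fun i => γ (i + j)) γ) ∧
    (∀ j : ℕ, 1 ≤ j → LexLT (fun i => γ 0 - γ (i + j)) γ) := by
  have hq : 1 < q := univoque_gt_one hqU
  have hq1 : 1 ≤ q := le_of_lt hq
  have hB : ∀ i, γ i ≤ γ 0 := g_digit_le0 hγ hq1
  have hd0 : 1 ≤ γ 0 := by
    rw [g_digit0_eq_floor hγ hq1]
    exact (Nat.one_le_floor_iff q).mpr hq1
  have hq_lt : q < (γ 0 : ℝ) + 1 := by
    rw [g_digit0_eq_floor hγ hq1]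
    exact_mod_cast Nat.lt_floor_add_one q
  constructor
  · intro j hj
    by_contra h
    have h1 : 1 ≤ vv q (fun i => γ (i + j)) :=
      compare_ge hq hγ (B := γ 0) (fun i => hB _) h
    obtain ⟨m, rfl⟩ : ∃ m, j = m + 1 := ⟨j - 1, by omega⟩
    have h2 := g_vv_shift_lt hq hγ m
    linarith
  · intro j hj
    by_contra hcon
    have hone : 1 ≤ vv q (fun i => γ 0 - γ (i + j)) :=
      compare_ge hq hγ (B := γ 0) (fun i => Nat.sub_le _ _) hcon
    -- largest index n ≤ j-1 with γ n ≥ 1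
    obtain ⟨n, hn_spec, hn_le, hmax⟩ :
        ∃ n, 1 ≤ γ n ∧ n ≤ j - 1 ∧ ∀ m, n < m → m ≤ j - 1 → γ m = 0 := by
      refine ⟨Nat.findGreatest (fun m => 1 ≤ γ m) (j-1),
        Nat.findGreatest_spec (P := fun m => 1 ≤ γ m) (Nat.zero_le _) hd0,
        Nat.findGreatest_le _, ?_⟩
      intro m hm1 hm2
      have := Nat.findGreatest_is_greatest (P := fun m => 1 ≤ γ m) hm1 hm2
      omega
    -- downward propagation
    have hdown : ∀ k : ℕ, k ≤ j - (n+1) → 1 ≤ vv q (fun i => γ 0 - γ (i + (j - k))) := by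
      intro k
      induction k with
      | zero => intro _; simpa using hone
      | succ k ih =>
        intro hk
        have hm1 : n < j - (k+1) := by omega
        have hm2 : j - (k+1) ≤ j - 1 := by omega
        have hγm : γ (j - (k+1)) = 0 := hmax _ hm1 hm2
        have hsplit := vv_split_one hq (a := fun i => γ 0 - γ (i + (j - (k+1))))
          (B := γ 0) (fun i => Nat.sub_le _ _)
        have hshift_eq : (fun i => (fun i' => γ 0 - γ (i' + (j - (k+1)))) (i+1))
            = fun i => γ 0 - γ (i + (j - k)) := by
          funext i
          have harith : (i+1) + (j - (k+1)) = i + (j - k) := by omega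
          show γ 0 - γ ((i+1) + (j - (k+1))) = γ 0 - γ (i + (j - k))
          rw [harith]
        rw [hshift_eq] at hsplit
        have hih : 1 ≤ vv q (fun i => γ 0 - γ (i + (j - k))) := ih (by omega)
        have h0 : ((fun i => γ 0 - γ (i + (j - (k+1)))) 0 : ℕ) = γ 0 := by
          show γ 0 - γ (0 + (j - (k+1))) = γ 0
          rw [Nat.zero_add, hγm, Nat.sub_zero]
        rw [show γ 0 - γ (0 + (j - (k+1))) = γ 0 from h0] at hsplit
        rw [hsplit]
        have hqpos : (0:ℝ) < q := by linarith
        rw [← add_div, le_div_iff₀ hqpos]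
        linarith
    have hfin : 1 ≤ vv q (fun i => γ 0 - γ (i + (n+1))) := by
      have := hdown (j - (n+1)) (le_refl _)
      have he : j - (j - (n+1)) = n + 1 := by omega
      rwa [he] at this
    -- build second expansion
    set t := vv q (fun i => γ (i + (n+1))) with ht
    have hcomp := vv_comp_eq hq hB (n+1)
    rw [hcomp] at hfin
    have ht0 : 0 ≤ t := vv_nonneg (by linarith) _
    have hr1 : t + 1 ≤ (γ 0 : ℝ)/(q-1) := by linarith
    obtain ⟨d, hd, hdsum⟩ := fill_lemma hq (M := γ 0) (by linarith) (by linarith : (0:ℝ) ≤ t + 1) hr1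
    set c : ℕ → ℕ := fun i => if i < n then γ i else if i = n then γ n - 1 else d (i - (n+1)) with hc
    have hcB : ∀ i, c i ≤ γ 0 := by
      intro i
      rw [hc]
      by_cases h1 : i < n
      · simp only [h1, if_true]; exact hB i
      · by_cases h2 : i = n
        · subst h2
          have hcv : c i = γ i - 1 := by simp [hc]
          rw [← hc, hcv]
          exact le_trans (Nat.sub_le _ _) (hB i)
        · simp only [h1, if_false, h2, if_false]
          exact hd _
    have hγ0q : (γ 0 : ℝ) ≤ q := g_digit0_le hγ (by linarith)
    have hsc : Summable (fun i : ℕ => (c i : ℝ)/q^(i+1)) := summable_digits hq hcB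
    -- compute the sum of c
    have hsplitc := vv_split (a := c) hsc (n+1)
    have hfinpart : (∑ i ∈ Finset.range (n+1), (c i : ℝ) / q ^ (i + 1))
        = (∑ i ∈ Finset.range n, (γ i : ℝ) / q ^ (i + 1)) + ((γ n : ℝ) - 1)/q^(n+1) := by
      rw [Finset.sum_range_succ]
      congr 1
      · apply Finset.sum_congr rfl
        intro i hi
        have hi' := Finset.mem_range.mp hi
        rw [hc]
        simp [hi']
      · have : c n = γ n - 1 := by rw [hc]; simp
        rw [this, Nat.cast_sub hn_spec]
        norm_num
    have htailc : vv q (fun i => c (i + (n+1))) = t + 1 := by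
      have he : (fun i => c (i + (n+1))) = d := by
        funext i
        rw [hc]
        have h1 : ¬ (i + (n+1) < n) := by omega
        have h2 : ¬ (i + (n+1) = n) := by omega
        simp only [h1, if_false, h2, if_false]
        congr 1
        omega
      rw [he, vv, hdsum.tsum_eq]
    have hvvγ : vv q γ = 1 := g_vv_one hq hγ
    have hsplitγ := vv_split (a := γ) (g_summable hq hγ) (n+1)
    rw [hvvγ, Finset.sum_range_succ] at hsplitγ
    rw [htailc, hfinpart] at hsplitc
    have hvvc : vv q c = 1 := by
      rw [hsplitc, hsplitγ]
      rw [← ht]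
      ring
    -- two distinct expansions
    have hexpc : IsExpansion q c := by
      refine ⟨fun i => ?_, hvvc⟩
      calc ((c i : ℝ)) ≤ (γ 0 : ℝ) := by exact_mod_cast hcB i
        _ ≤ q := hγ0q
    have hexpγ : IsExpansion q γ := by
      refine ⟨fun i => ?_, hvvγ⟩
      calc ((γ i : ℝ)) ≤ (γ 0 : ℝ) := by exact_mod_cast hB i
        _ ≤ q := hγ0q
    obtain ⟨w, _, huni⟩ := hqU.2
    have hcw := huni _ hexpc
    have hγw := huni _ hexpγ
    have : c = γ := hcw.trans hγw.symm
    have hcn := congrFun this n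
    rw [hc] at hcn
    simp at hcn
    omega

lemma vv_anti {γ : ℕ → ℕ} {B : ℕ} (hB : ∀ i, γ i ≤ B) {x y : ℝ} (hx : 1 < x) (hxy : x ≤ y) :
    vv y γ ≤ vv x γ := by
  have hy : 1 < y := lt_of_lt_of_le hx hxy
  apply Summable.tsum_le_tsum _ (summable_digits hy hB) (summable_digits hx hB)
  intro i
  show (γ i : ℝ) / y ^ (i+1) ≤ (γ i : ℝ) / x ^ (i+1)
  gcongr

lemma exists_root {γ : ℕ → ℕ} (hB : ∀ i, γ i ≤ γ 0) (hd0 : 1 ≤ γ 0)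
    {k1 k2 : ℕ} (hk12 : k1 < k2) (h1 : 1 ≤ γ k1) (h2 : 1 ≤ γ k2) :
    ∃ q : ℝ, 1 < q ∧ vv q γ = 1 := by
  set N := k2 + 1 with hN
  set a : ℝ := (2:ℝ) ^ ((N:ℝ)⁻¹) with ha
  have hNpos : (0:ℝ) < (N:ℝ) := by positivity
  have ha1 : 1 < a := by
    rw [ha]
    have hNi : (0:ℝ) < ((N:ℝ))⁻¹ := by positivity
    exact (Real.one_lt_rpow_iff_of_pos (by norm_num)).mpr (Or.inl ⟨by norm_num, hNi⟩)
  have haN : a ^ N = 2 := by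
    rw [ha, ← Real.rpow_natCast ((2:ℝ) ^ ((N:ℝ)⁻¹)) N, ← Real.rpow_mul (by norm_num)]
    rw [inv_mul_cancel₀ (ne_of_gt hNpos), Real.rpow_one]
  set b : ℝ := max a ((γ 0 : ℝ) + 1) with hb
  have hab : a ≤ b := le_max_left _ _
  have hb1 : 1 < b := lt_of_lt_of_le ha1 hab
  -- f a ≥ 1
  have hfa : 1 ≤ vv a γ := by
    have hs : Summable (fun i : ℕ => (γ i : ℝ)/a^(i+1)) := summable_digits ha1 hB
    have hsum2 : (∑ i ∈ ({k1, k2} : Finset ℕ), (γ i : ℝ)/a^(i+1)) ≤ vv a γ :=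
      Summable.sum_le_tsum _ (fun i _ => by positivity) hs
    rw [Finset.sum_pair (by omega)] at hsum2
    have hterm : ∀ k, k < N → 1 ≤ γ k → 1/a^N ≤ (γ k : ℝ)/a^(k+1) := by
      intro k hk hγk
      have h1r : (1:ℝ) ≤ (γ k : ℝ) := by exact_mod_cast hγk
      have hpow : a^(k+1) ≤ a^N := pow_le_pow_right₀ (le_of_lt ha1) (by omega)
      have hp1 : (0:ℝ) < a^(k+1) := by positivity
      have hp2 : (0:ℝ) < a^N := by positivity
      rw [div_le_div_iff₀ hp2 hp1]
      nlinarith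
    have ht1 := hterm k1 (by omega) h1
    have ht2 := hterm k2 (by omega) h2
    have : 2/a^N ≤ vv a γ := by
      have : (2:ℝ)/a^N = 1/a^N + 1/a^N := by ring
      linarith [this]
    rwa [haN, div_self (by norm_num : (2:ℝ) ≠ 0)] at this
  -- f b ≤ 1
  have hfb : vv b γ ≤ 1 := by
    have hγ01 : (1:ℝ) < (γ 0:ℝ) + 1 := by
      have : (1:ℝ) ≤ (γ 0 : ℝ) := by exact_mod_cast hd0
      linarith
    calc vv b γ ≤ vv ((γ 0:ℝ)+1) γ := by
          by_cases hc : (γ 0:ℝ) + 1 ≤ b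
          · exact vv_anti hB hγ01 hc
          · have : b = max a ((γ 0:ℝ)+1) := hb
            push_neg at hc
            have : (γ 0:ℝ) + 1 ≤ b := le_max_right _ _
            linarith
      _ ≤ (γ 0:ℝ)/((γ 0:ℝ) + 1 - 1) := vv_le_bound hγ01 hB
      _ ≤ 1 := by
          rw [add_sub_cancel_right]
          rcases Nat.eq_zero_or_pos (γ 0) with h | h
          · simp [h]
          · have : (0:ℝ) < (γ 0:ℝ) := by exact_mod_cast h
            rw [div_self (ne_of_gt this)]
  -- continuity
  have hcont : ContinuousOn (fun x : ℝ => vv x γ) (Set.Icc a b) := by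
    have : (fun x : ℝ => vv x γ) = fun x => ∑' i : ℕ, (γ i : ℝ)/x^(i+1) := rfl
    rw [this]
    apply continuousOn_tsum (u := fun i : ℕ => (γ 0 : ℝ) * (1/a)^(i+1))
    · intro i
      apply ContinuousOn.div continuousOn_const (by fun_prop)
      intro x hx
      have : 1 < x := lt_of_lt_of_le ha1 hx.1
      positivity
    · exact (summable_geom_aux ha1).mul_left _
    · intro n x hx
      have hx1 : 1 < x := lt_of_lt_of_le ha1 hx.1
      rw [Real.norm_eq_abs, abs_of_nonneg (by positivity)]
      have hc : ((γ n : ℝ)) ≤ (γ 0 : ℝ) := by exact_mod_cast hB n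
      have hpow : a^(n+1) ≤ x^(n+1) := pow_le_pow_left₀ (by linarith) hx.1 _
      calc (γ n : ℝ)/x^(n+1) ≤ (γ 0 : ℝ)/a^(n+1) := by
            gcongr
        _ = (γ 0 : ℝ) * (1/a)^(n+1) := by
            rw [one_div, inv_pow, div_eq_mul_inv]
  -- IVT
  have hmem : (1:ℝ) ∈ Set.Icc (vv b γ) (vv a γ) := ⟨hfb, hfa⟩
  have := intermediate_value_Icc' hab hcont hmem
  obtain ⟨q, hqmem, hq⟩ := this
  exact ⟨q, lt_of_lt_of_le ha1 hqmem.1, hq⟩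

lemma surj_main {γ : ℕ → ℕ}
    (hA : ∀ j : ℕ, 1 ≤ j → LexLT (fun i => γ (i + j)) γ)
    (hBc : ∀ j : ℕ, 1 ≤ j → LexLT (fun i => γ 0 - γ (i + j)) γ) :
    ∃ q : ℝ, q ∈ UnivoqueSet ∧ IsGreedy q γ := by
  -- digits bounded by γ 0
  have hB : ∀ i, γ i ≤ γ 0 := by
    intro i
    cases i with
    | zero => exact le_refl _
    | succ m =>
      obtain ⟨n, heq, hlt⟩ := hA (m+1) (by omega)
      rcases Nat.eq_zero_or_pos n with hn | hn
      · subst hn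
        have : γ (0 + (m+1)) < γ 0 := hlt
        rw [Nat.zero_add] at this
        exact le_of_lt this
      · have := heq 0 hn
        have h0 : γ (0 + (m+1)) = γ 0 := this
        rw [Nat.zero_add] at h0
        exact le_of_eq h0
  have hd0 : 1 ≤ γ 0 := by
    obtain ⟨n, heq, hlt⟩ := hA 1 (le_refl _)
    have : γ (n + 1) < γ n := hlt
    have := hB n
    omega
  have hinf : ∀ N : ℕ, ∃ k, N ≤ k ∧ γ k ≠ 0 := by
    intro N
    by_contra h
    push_neg at h
    obtain ⟨n, heq, hlt⟩ := hBc (N+1) (by omega)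
    have h1 : γ (n + (N+1)) = 0 := h _ (by omega)
    have h2 : γ 0 - γ (n + (N+1)) < γ n := hlt
    have h3 := hB n
    omega
  obtain ⟨k1, hk1N, hk1⟩ := hinf 0
  obtain ⟨k2, hk2N, hk2⟩ := hinf (k1+1)
  obtain ⟨q, hq, hroot⟩ := exists_root hB hd0 (show k1 < k2 by omega)
    (by omega) (by omega)
  have hq0 : (0:ℝ) < q := by linarith
  have hsγ : Summable (fun i : ℕ => (γ i : ℝ)/q^(i+1)) := summable_digits hq hB
  have hγ0q : (γ 0 : ℝ) ≤ q := by
    have h1 : (γ 0 : ℝ)/q^(0+1) ≤ vv q γ := Summable.le_tsum hsγ 0 (fun j _ => by positivity)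
    rw [hroot] at h1
    rw [pow_one] at h1
    rw [div_le_one hq0] at h1
    linarith
  -- the family
  set A : Set (ℕ → ℕ) :=
    {a | ∃ j, 1 ≤ j ∧ (a = (fun i => γ (i + j)) ∨ a = (fun i => γ 0 - γ (i + j)))} with hAdef
  have hAlex : ∀ a ∈ A, LexLT a γ := by
    rintro a ⟨j, hj, h | h⟩ <;> subst h
    · exact hA j hj
    · exact hBc j hj
  have hAB : ∀ a ∈ A, ∀ i, a i ≤ γ 0 := by
    rintro a ⟨j, hj, h | h⟩ <;> subst h <;> intro i
    · exact hB _
    · exact Nat.sub_le _ _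
  have hAshift : ∀ a ∈ A, ∀ m : ℕ, (fun i => a (i + (m+1))) ∈ A := by
    rintro a ⟨j, hj, h | h⟩ m <;> subst h
    · refine ⟨j + (m+1), by omega, Or.inl ?_⟩
      funext i
      show γ ((i + (m+1)) + j) = γ (i + (j + (m+1)))
      congr 1
      omega
    · refine ⟨j + (m+1), by omega, Or.inr ?_⟩
      funext i
      show γ 0 - γ ((i + (m+1)) + j) = γ 0 - γ (i + (j + (m+1)))
      congr 2
      omega
  have hflt := family_lt_one hq hB hroot hinf A hAlex hAB hAshift
  have hshift_mem : ∀ n : ℕ, (fun i => γ (i + (n+1))) ∈ A := fun n => ⟨n+1, by omega, Or.inl rfl⟩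
  have hcomp_mem : ∀ n : ℕ, (fun i => γ 0 - γ (i + (n+1))) ∈ A := fun n => ⟨n+1, by omega, Or.inr rfl⟩
  -- greedy
  have hgreedy : IsGreedy q γ := by
    intro n
    have hsplit := vv_split (a := γ) hsγ (n+1)
    rw [hroot, Finset.sum_range_succ] at hsplit
    have hvs0 : 0 ≤ vv q (fun i => γ (i + (n+1))) := vv_nonneg hq0 _
    have hvslt : vv q (fun i => γ (i + (n+1))) < 1 := hflt _ (hshift_mem n)
    have hqn : (0:ℝ) < q^(n+1) := by positivity
    constructor
    · show (∑ i ∈ Finset.range n, (γ i : ℝ)/q^(i+1)) + (γ n : ℝ)/q^(n+1) ≤ 1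
      have : 0 ≤ (vv q (fun i => γ (i + (n+1))))/q^(n+1) := by positivity
      linarith
    · intro k hk
      have hk' : (∑ i ∈ Finset.range n, (γ i : ℝ)/q^(i+1)) + (k : ℝ)/q^(n+1) ≤ 1 := hk
      by_contra hcon
      push_neg at hcon
      have hk2 : (γ n : ℝ) + 1 ≤ (k : ℝ) := by exact_mod_cast hcon
      have h5 : ((γ n : ℝ) + 1)/q^(n+1) ≤ (k:ℝ)/q^(n+1) := by gcongr
      have h6 : vv q (fun i => γ (i + (n+1)))/q^(n+1) < 1/q^(n+1) := by gcongr
      have h7 : ((γ n : ℝ) + 1)/q^(n+1) = (γ n : ℝ)/q^(n+1) + 1/q^(n+1) := by ring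
      linarith
  -- univoque
  refine ⟨q, ⟨le_of_lt hq, ?_⟩, hgreedy⟩
  have hexpγ : IsExpansion q γ := by
    refine ⟨fun i => ?_, hroot⟩
    calc ((γ i : ℝ)) ≤ (γ 0 : ℝ) := by exact_mod_cast hB i
      _ ≤ q := hγ0q
  refine ⟨γ, hexpγ, ?_⟩
  intro c hc
  have hq_lt : q < (γ 0 : ℝ) + 1 := by
    have := g_ub hgreedy 0
    simp only [Finset.range_zero, Finset.sum_empty, zero_add, pow_one] at this
    rw [lt_div_iff₀ hq0] at this
    linarith
  have hcB : ∀ i, c i ≤ γ 0 := by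
    intro i
    have h1 := hc.1 i
    have h2 : (c i : ℝ) < (γ 0 : ℝ) + 1 := lt_of_le_of_lt h1 hq_lt
    have h3 : (c i : ℝ) < ((γ 0 + 1 : ℕ) : ℝ) := by push_cast; linarith
    have := (Nat.cast_lt (α := ℝ)).mp h3
    omega
  by_contra hne
  have hex : ∃ n, c n ≠ γ n := by
    by_contra h
    push_neg at h
    exact hne (funext h)
  classical
  let n := Nat.find hex
  have hn : c n ≠ γ n := Nat.find_spec hex
  have heq : ∀ i < n, c i = γ i := fun i hi => by
    by_contra h
    exact absurd hi (not_lt.mpr (Nat.find_le h))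
  have hsc : Summable (fun i : ℕ => (c i : ℝ)/q^(i+1)) := summable_digits hq hcB
  rcases lt_or_gt_of_ne hn with hlt | hgt
  · -- c n < γ n : contradiction via key_ineq
    have hkey := key_ineq hq hB hcB hroot heq hlt
    have ht0 : 0 ≤ vv q (fun i => γ (i + (n+1))) := vv_nonneg hq0 _
    have hcompl : vv q (fun i => γ 0 - γ (i + (n+1))) < 1 := hflt _ (hcomp_mem n)
    -- vv (σ c) ≤ vv comp + vv (σ γ)
    have hbound : vv q (fun i => c (i + (n+1)))
        ≤ vv q (fun i => γ 0 - γ (i + (n+1))) + vv q (fun i => γ (i + (n+1))) := by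
      have hs1 : Summable (fun i : ℕ => ((γ 0 - γ (i + (n+1)) : ℕ):ℝ)/q^(i+1)) :=
        summable_digits hq (B := γ 0) (fun i => Nat.sub_le _ _)
      have hs2 : Summable (fun i : ℕ => (γ (i + (n+1)) : ℝ)/q^(i+1)) :=
        summable_digits hq (B := γ 0) (fun i => hB _)
      have hterm : ∀ i : ℕ, (c (i + (n+1)) : ℝ)/q^(i+1)
          ≤ ((γ 0 - γ (i + (n+1)) : ℕ):ℝ)/q^(i+1) + (γ (i + (n+1)) : ℝ)/q^(i+1) := by
        intro i
        rw [← add_div]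
        apply div_le_div_of_nonneg_right ?_ (by positivity)
        rw [Nat.cast_sub (hB _)]
        have : (c (i + (n+1)) : ℝ) ≤ (γ 0 : ℝ) := by exact_mod_cast hcB _
        linarith
      calc vv q (fun i => c (i + (n+1)))
          ≤ ∑' i : ℕ, (((γ 0 - γ (i + (n+1)) : ℕ):ℝ)/q^(i+1) + (γ (i + (n+1)) : ℝ)/q^(i+1)) :=
            Summable.tsum_le_tsum hterm (summable_digits hq (B := γ 0) (fun i => hcB _)) (hs1.add hs2)
        _ = vv q (fun i => γ 0 - γ (i + (n+1))) + vv q (fun i => γ (i + (n+1))) :=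
            Summable.tsum_add hs1 hs2
    have hvvc : vv q c = 1 := hc.2
    have hqn : (0:ℝ) < q^(n+1) := by positivity
    have hlt2 : vv q (fun i => c (i + (n+1))) < 1 + vv q (fun i => γ (i + (n+1))) := by
      linarith
    have h8 : vv q (fun i => c (i + (n+1)))/q^(n+1)
        < (1 + vv q (fun i => γ (i + (n+1))))/q^(n+1) := by gcongr
    have h9 : (1 + vv q (fun i => γ (i + (n+1))))/q^(n+1)
        = 1/q^(n+1) + vv q (fun i => γ (i + (n+1)))/q^(n+1) := by ring
    linarith
  · -- c n > γ n : contradiction with greedy upper bound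
    have h1 : (∑ i ∈ Finset.range (n+1), (c i : ℝ)/q^(i+1)) ≤ 1 := by
      rw [← hc.2]
      exact Summable.sum_le_tsum _ (fun i _ => by positivity) hsc
    rw [Finset.sum_range_succ] at h1
    have h2 : (∑ i ∈ Finset.range n, (c i : ℝ)/q^(i+1))
        = ∑ i ∈ Finset.range n, (γ i : ℝ)/q^(i+1) := by
      apply Finset.sum_congr rfl
      intro i hi; rw [heq i (Finset.mem_range.mp hi)]
    rw [h2] at h1
    have := (hgreedy n).2 h1
    omega

/-- The map `q ↦ (γ_i(q))` is a strictly increasing bijection between `𝒰` and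
the set of sequences satisfying `γ_{j+1}γ_{j+2}… < γ_1γ_2…` and
`(γ_1-γ_{j+1})(γ_1-γ_{j+2})… < γ_1γ_2…` for all `j ≥ 1`. -/
theorem greedy_expansion_bijection (g : ℝ → ℕ → ℕ)
    (hg : ∀ q : ℝ, 1 ≤ q → IsGreedy q (g q)) :
    Set.BijOn g UnivoqueSet
      {γ : ℕ → ℕ |
        (∀ j : ℕ, 1 ≤ j → LexLT (fun i => γ (i + j)) γ) ∧
        (∀ j : ℕ, 1 ≤ j → LexLT (fun i => γ 0 - γ (i + j)) γ)} ∧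
    (∀ p ∈ UnivoqueSet, ∀ q ∈ UnivoqueSet, p < q → LexLT (g p) (g q)) := by
  have hmono : ∀ p ∈ UnivoqueSet, ∀ q ∈ UnivoqueSet, p < q → LexLT (g p) (g q) := by
    intro p hp q hq hpq
    exact greedy_mono (univoque_gt_one hp) (univoque_gt_one hq) hpq (hg p hp.1) (hg q hq.1)
  refine ⟨⟨?_, ?_, ?_⟩, hmono⟩
  · intro q hq
    exact forward_maps hq (hg q hq.1)
  · intro p hp q hq hpq
    by_contra hne
    rcases lt_trichotomy p q with h | h | h
    · exact lexLT_irrefl _ (hpq ▸ hmono p hp q hq h)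
    · exact hne h
    · exact lexLT_irrefl _ (hpq.symm ▸ hmono q hq p hp h)
  · intro γ hγmem
    obtain ⟨q, hqU, hgreedy⟩ := surj_main hγmem.1 hγmem.2
    exact ⟨q, hqU, greedy_unique (hg q hqU.1) hgreedy⟩
end

section
/- Let (α_i)_{i≥1} be a sequence of nonnegative integers satisfying α_{j+1} α_{j+2} … ≤ α_1 α_2 … lexicographically for all j ≥ 1, and (α_1 − α_{j+1})(α_1 − α_{j+2}) … < α_1 α_2 … lexicographically for all j ≥ 1. Then there exist arbitrarily large integers m such that (α_1 − α_{j+1}) … (α_1 − α_m) < α_1 … α_{m−j} lexicographically (as finite words) for all 0 ≤ j < m. -/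
/-!
Write `cⱼ` for the complemented shift `i ↦ α₀ - α_{j+i}` and let `pⱼ` be the position at
which `cⱼ` first drops below `α` (for `j = 0` it exists because `α₀`, the largest digit, is
positive). For `1 ≤ k ≤ pⱼ`, the word `c_{j+k}` agrees with the shift of `α` by `k` up to
position `pⱼ - k` and is smaller there, while that shift is lexicographically at most `α`;
hence `c_{j+k}` drops below `α` by position `pⱼ - k`, i.e. before `j + pⱼ`. Taking
`m = 1 + max_{j ≤ M} (j + pⱼ)`, every `j < m` lies in some window `[j₀, j₀ + p_{j₀}]` with
`j₀ ≤ M`, so every `cⱼ` drops below `α` within its first `m - j` letters.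
-/

def LexLTAt (p : ℕ) (a b : ℕ → ℕ) : Prop := (∀ i < p, a i = b i) ∧ a p < b p

namespace LexLTAt

variable {p k : ℕ} {a b c : ℕ → ℕ}

theorem shift (h : LexLTAt p a b) (hk : k ≤ p) :
    LexLTAt (p - k) (fun i => a (k + i)) (fun i => b (k + i)) :=
  ⟨fun i hi => h.1 (k + i) (by omega), by simpa [Nat.add_sub_cancel' hk] using h.2⟩

theorem trans_lexLE (h : LexLTAt p a b) (hbc : LexLE b c) : ∃ q ≤ p, LexLTAt q a c := by
  rcases hbc with ⟨r, hr, hrc⟩ | rfl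
  · rcases lt_or_ge r p with hrp | hpr
    · exact ⟨r, hrp.le, fun i hi => (h.1 i (hi.trans hrp)).trans (hr i hi), h.1 r hrp ▸ hrc⟩
    · refine ⟨p, le_rfl, fun i hi => (h.1 i hi).trans (hr i (by omega)), ?_⟩
      rcases hpr.eq_or_lt with rfl | hpr
      · exact h.2.trans hrc
      · exact hr p hpr ▸ h.2
  · exact ⟨p, le_rfl, h⟩

end LexLTAt

theorem LexLE.apply_zero_le {a b : ℕ → ℕ} (h : LexLE a b) : a 0 ≤ b 0 := by
  rcases h with ⟨n, hn, hlt⟩ | rfl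
  · rcases n.eq_zero_or_pos with rfl | hpos
    · exact hlt.le
    · exact (hn 0 hpos).le
  · exact le_rfl

theorem exists_ge_forall_le_mem_window (p : ℕ → ℕ) (M : ℕ) :
    ∃ F ≥ M, ∀ j ≤ F, ∃ i ≤ j, j ≤ i + p i ∧ i + p i ≤ F := by
  obtain ⟨j₀, hj₀M, hj₀max⟩ := (Finset.range (M + 1)).exists_max_image (fun j => j + p j)
    ⟨M, Finset.self_mem_range_succ M⟩
  have hj₀M := Finset.mem_range_succ_iff.1 hj₀M
  have hM := hj₀max M (Finset.self_mem_range_succ M)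
  refine ⟨j₀ + p j₀, by omega, fun j hj => ?_⟩
  rcases le_or_gt j M with hjM | hMj
  · exact ⟨j, le_rfl, by omega, hj₀max j (Finset.mem_range_succ_iff.2 hjM)⟩
  · exact ⟨j₀, by omega, hj, le_rfl⟩

/-- If `(α_i)` satisfies conditions (23) and (24), then there exist arbitrarily
large `m` such that `(α_1-α_{j+1})…(α_1-α_m) < α_1…α_{m-j}` for all `0 ≤ j < m`. -/
theorem exists_arbitrarily_large_good_m (α : ℕ → ℕ)
    (h1 : ∀ j : ℕ, 1 ≤ j → LexLE (fun i => α (i + j)) α)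
    (h2 : ∀ j : ℕ, 1 ≤ j → LexLT (fun i => α 0 - α (i + j)) α) :
    ∀ M : ℕ, ∃ m ≥ M, ∀ j < m, WordLT (m - j) (fun i => α 0 - α (j + i)) α := by
  have hshift : ∀ k, LexLE (fun i => α (k + i)) α := by
    rintro (_ | k)
    · exact Or.inr (funext fun i => by rw [Nat.zero_add])
    · simpa only [Nat.add_comm] using h1 (k + 1) (by omega)
  have hpos : 0 < α 0 := by
    obtain ⟨n, -, hn⟩ := h2 1 le_rfl
    exact (Nat.zero_lt_of_lt hn).trans_le (hshift n).apply_zero_le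
  have hwit : ∀ j, ∃ p, LexLTAt p (fun i => α 0 - α (j + i)) α := by
    rintro (_ | j)
    · exact ⟨0, fun i hi => absurd hi (Nat.not_lt_zero i), by simpa using hpos⟩
    · obtain ⟨n, hn⟩ := h2 (j + 1) (by omega)
      exact ⟨n, by simpa only [LexLTAt, Nat.add_comm] using hn⟩
  choose p hp using hwit
  intro M
  obtain ⟨F, hFM, hF⟩ := exists_ge_forall_le_mem_window p M
  refine ⟨F + 1, by omega, fun j hj => ?_⟩
  obtain ⟨i, hij, hji, hiF⟩ := hF j (by omega)
  obtain ⟨q, hq, hlt⟩ := ((hp i).shift (k := j - i) (by omega)).trans_lexLE (hshift _)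
  have hshifted : (fun t => α 0 - α (i + (j - i + t))) = fun t => α 0 - α (j + t) :=
    funext fun t => by rw [← Nat.add_assoc, Nat.add_sub_cancel' hij]
  exact ⟨q, by omega, hshifted ▸ hlt⟩
end

section
/- Let (α_i)_{i≥1} be a sequence of nonnegative integers satisfying α_{j+1} α_{j+2} … ≤ α_1 α_2 … lexicographically for all j ≥ 1, and (α_1 − α_{j+1})(α_1 − α_{j+2}) … < α_1 α_2 … lexicographically for all j ≥ 1. Then for every positive integer m, the strict lexicographic inequality (α_1 − α_1)(α_1 − α_2) … (α_1 − α_m) < α_{m+1} α_{m+2} … α_{2m} holds between these two finite words of length m. -/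
/-- If `(α_i)` satisfies conditions (23) and (24), then for every `m ≥ 1` one has
`(α_1-α_1)…(α_1-α_m) < α_{m+1}…α_{2m}` lexicographically. -/
theorem complement_prefix_lt_shifted (α : ℕ → ℕ)
    (h1 : ∀ j : ℕ, 1 ≤ j → LexLE (fun i => α (i + j)) α)
    (h2 : ∀ j : ℕ, 1 ≤ j → LexLT (fun i => α 0 - α (i + j)) α) :
    ∀ m : ℕ, 1 ≤ m → WordLT m (fun i => α 0 - α i) (fun i => α (m + i)) := by
  -- Every term is at most `α 0`.
  have hbound : ∀ i, α i ≤ α 0 := by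
    intro i
    rcases Nat.eq_zero_or_pos i with rfl | hi
    · exact le_rfl
    · rcases h1 i hi with ⟨n, hn, hlt⟩ | heq
      · rcases Nat.eq_zero_or_pos n with rfl | hn0
        · simpa using hlt.le
        · have := hn 0 hn0
          simpa using this.le
      · have := congrFun heq 0
        simpa using this.le
  intro m hm
  -- apply (24) with j = m
  obtain ⟨k, hk, hklt⟩ := h2 m hm
  simp only at hk hklt
  by_cases hkm : k < m
  · -- the first difference occurs within the first m positions: direct witness
    refine ⟨k, hkm, ?_, ?_⟩
    · intro j hj
      show α 0 - α j = α (m + j)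
      have e := hk j hj
      have eq1 : α (j + m) = α (m + j) := by rw [Nat.add_comm]
      have b1 := hbound (m + j)
      have b2 := hbound j
      omega
    · show α 0 - α k < α (m + k)
      have eq1 : α (k + m) = α (m + k) := by rw [Nat.add_comm]
      have b1 := hbound (m + k)
      have b2 := hbound k
      omega
  · -- k ≥ m : derive a contradiction with (23) at j = 2m
    exfalso
    push_neg at hkm
    -- periodicity on the initial segment
    have per : ∀ t, t < k - m → α (t + 2 * m) = α t := by
      intro t ht
      have e1 := hk (t + m) (by omega)
      rw [show t + m + m = t + 2 * m by omega] at e1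
      have e2 := hk t (by omega)
      have b1 := hbound (t + 2 * m)
      have b2 := hbound (t + m)
      omega
    -- strict increase at position k - m
    have hj0 : α (k - m) < α (k - m + 2 * m) := by
      rw [show k - m + 2 * m = k + m by omega] at *
      have e2 := hk (k - m) (by omega)
      rw [show k - m + m = k by omega] at e2
      have b1 := hbound (k + m)
      have b2 := hbound k
      omega
    rcases h1 (2 * m) (by omega) with ⟨n, hn, hlt⟩ | heq
    · simp only at hn hlt
      rcases lt_trichotomy n (k - m) with h | h | h
      · have := per n h
        omega
      · subst h
        omega
      · have := hn (k - m) h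
        omega
    · have := congrFun heq (k - m)
      omega
end

section
/- A sequence (γ_i)_{i≥1} of nonnegative integers is the greedy q-expansion for some real number q ≥ 1 if and only if it satisfies γ_{j+1} γ_{j+2} … < γ_1 γ_2 … lexicographically for all j ≥ 1. -/
noncomputable def ParryT (γ : ℕ → ℕ) (q : ℝ) (n : ℕ) : ℝ :=
  ∑' i : ℕ, (γ (n + i) : ℝ) / q ^ (i + 1)

lemma parry_summable {γ : ℕ → ℕ} {q : ℝ} (hq : 1 < q) {M : ℕ} (hM : ∀ i, γ i ≤ M) (n : ℕ) :
    Summable (fun i : ℕ => (γ (n + i) : ℝ) / q ^ (i + 1)) := by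
  have hq0 : (0:ℝ) < q := lt_trans one_pos hq
  have h1 : (0:ℝ) ≤ 1/q := by positivity
  have h2 : 1/q < 1 := by rw [div_lt_one hq0]; exact hq
  have hgeo : Summable (fun i : ℕ => (M:ℝ) * (1/q) * (1/q)^i) :=
    (summable_geometric_of_lt_one h1 h2).mul_left _
  refine Summable.of_nonneg_of_le (fun i => by positivity) (fun i => ?_) hgeo
  have : (γ (n+i) : ℝ) ≤ M := by exact_mod_cast hM (n+i)
  calc (γ (n + i) : ℝ) / q ^ (i + 1) ≤ (M:ℝ) / q ^ (i+1) := by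
        apply div_le_div_of_nonneg_right this (by positivity) |>.trans_eq rfl
    _ = (M:ℝ) * (1/q) * (1/q)^i := by
        rw [mul_assoc, ← pow_succ', one_div_pow, mul_one_div]

lemma parryT_nonneg {γ : ℕ → ℕ} {q : ℝ} (hq : 1 < q) (n : ℕ) : 0 ≤ ParryT γ q n := by
  have hq0 : (0:ℝ) < q := lt_trans one_pos hq
  exact tsum_nonneg (fun i => by positivity)

lemma parryT_le {γ : ℕ → ℕ} {q : ℝ} (hq : 1 < q) {M : ℕ} (hM : ∀ i, γ i ≤ M) (n : ℕ) :
    ParryT γ q n ≤ M / (q - 1) := by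
  have hq0 : (0:ℝ) < q := lt_trans one_pos hq
  have h1 : (0:ℝ) ≤ 1/q := by positivity
  have h2 : 1/q < 1 := by rw [div_lt_one hq0]; exact hq
  have hgeo : Summable (fun i : ℕ => (M:ℝ) * (1/q) * (1/q)^i) :=
    (summable_geometric_of_lt_one h1 h2).mul_left _
  have hle : ParryT γ q n ≤ ∑' i : ℕ, (M:ℝ) * (1/q) * (1/q)^i := by
    refine Summable.tsum_le_tsum (fun i => ?_) (parry_summable hq hM n) hgeo
    have : (γ (n+i) : ℝ) ≤ M := by exact_mod_cast hM (n+i)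
    calc (γ (n + i) : ℝ) / q ^ (i + 1) ≤ (M:ℝ) / q ^ (i+1) :=
          div_le_div_of_nonneg_right this (by positivity) |>.trans_eq rfl
      _ = (M:ℝ) * (1/q) * (1/q)^i := by
          rw [mul_assoc, ← pow_succ', one_div_pow, mul_one_div]
  refine hle.trans_eq ?_
  rw [tsum_mul_left, tsum_geometric_of_lt_one h1 h2]
  have hq1 : q - 1 ≠ 0 := by linarith
  field_simp

lemma parryT_rec {γ : ℕ → ℕ} {q : ℝ} (hq : 1 < q) {M : ℕ} (hM : ∀ i, γ i ≤ M) (n : ℕ) :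
    ParryT γ q n = ((γ n : ℝ) + ParryT γ q (n+1)) / q := by
  have hq0 : (0:ℝ) < q := lt_trans one_pos hq
  have hs := parry_summable hq hM n
  rw [ParryT, Summable.tsum_eq_zero_add hs]
  have h1 : ∀ i : ℕ, (γ (n + (i+1)) : ℝ) / q ^ (i + 1 + 1)
      = ((γ ((n+1) + i) : ℝ) / q ^ (i + 1)) * (1/q) := by
    intro i
    have : n + (i+1) = (n+1) + i := by omega
    rw [this, pow_succ]
    field_simp
  rw [tsum_congr h1, tsum_mul_right, ← ParryT]
  field_simp
  simp only [Nat.add_zero, zero_add, pow_one]; ring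
lemma parryT_split {γ : ℕ → ℕ} {q : ℝ} (hq : 1 < q) {M : ℕ} (hM : ∀ i, γ i ≤ M)
    (n r : ℕ) :
    ParryT γ q n = (∑ i ∈ Finset.range r, (γ (n + i) : ℝ) / q ^ (i + 1))
      + ParryT γ q (n + r) / q ^ r := by
  have hq0 : (0:ℝ) < q := lt_trans one_pos hq
  induction r with
  | zero => simp
  | succ r ih =>
    rw [ih, Finset.sum_range_succ, parryT_rec hq hM (n + r)]
    have h1 : n + (r+1) = (n + r) + 1 := by omega
    rw [h1, pow_succ]
    field_simp
    ring

lemma parry_digit_le {γ : ℕ → ℕ}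
    (hlex : ∀ j : ℕ, 1 ≤ j → LexLT (fun i => γ (i + j)) γ) (n : ℕ) : γ n ≤ γ 0 := by
  rcases Nat.eq_zero_or_pos n with h | h
  · simp [h]
  obtain ⟨k, hk1, hk2⟩ := hlex n h
  rcases Nat.eq_zero_or_pos k with hk | hk
  · subst hk; simpa using hk2.le
  · have := hk1 0 hk; simpa using this.le

/-- Key difference identity coming from the lex condition. -/
lemma parry_diff {γ : ℕ → ℕ} {q : ℝ} (hq : 1 < q) {M : ℕ} (hM : ∀ i, γ i ≤ M)
    {n k : ℕ} (hagree : ∀ i < k, γ (i + n) = γ i) :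
    ParryT γ q n - ParryT γ q 0
      = (((γ (n + k) : ℝ) - γ k) + (ParryT γ q (n + k + 1) - ParryT γ q (k + 1)))
        / q ^ (k + 1) := by
  have hq0 : (0:ℝ) < q := lt_trans one_pos hq
  have h1 := parryT_split hq hM n (k+1)
  have h2 := parryT_split hq hM 0 (k+1)
  rw [Finset.sum_range_succ] at h1 h2
  have hs : ∑ i ∈ Finset.range k, (γ (n + i) : ℝ) / q ^ (i + 1)
      = ∑ i ∈ Finset.range k, (γ (0 + i) : ℝ) / q ^ (i + 1) := by
    refine Finset.sum_congr rfl (fun i hi => ?_)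
    have := hagree i (Finset.mem_range.mp hi)
    rw [Nat.zero_add, Nat.add_comm n i, this]
  have e2 : (0:ℕ) + k = k := by omega
  have e3 : (0:ℕ) + (k+1) = k + 1 := by omega
  have e4 : n + (k+1) = n + k + 1 := by omega
  rw [h1, h2, hs, e2, e3, e4]
  have hpow : (0:ℝ) < q ^ (k+1) := by positivity
  field_simp
  ring

lemma parryT_le_one {γ : ℕ → ℕ} {q : ℝ} (hq : 1 < q) {M : ℕ} (hM : ∀ i, γ i ≤ M)
    (hlex : ∀ j : ℕ, 1 ≤ j → LexLT (fun i => γ (i + j)) γ)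
    (hT0 : ParryT γ q 0 = 1) :
    ∀ n, 1 ≤ n → ParryT γ q n ≤ 1 := by
  have hq0 : (0:ℝ) < q := lt_trans one_pos hq
  set C : ℝ := (M:ℝ) / (q - 1) with hC
  have hC0 : 0 ≤ C := by
    apply div_nonneg (by positivity); linarith
  -- step: if all tails beyond are ≤ 1 + x then this tail ≤ 1 + x/q
  have step : ∀ x : ℝ, 0 ≤ x → (∀ m, 1 ≤ m → ParryT γ q m - 1 ≤ x) →
      ∀ n, 1 ≤ n → ParryT γ q n - 1 ≤ x / q := by
    intro x hx hall n hn
    obtain ⟨k, hk1, hk2⟩ := hlex n hn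
    have hdiff := parry_diff hq hM (n := n) (k := k) hk1
    rw [hT0] at hdiff
    have hd1 : (γ (n + k) : ℝ) - γ k ≤ -1 := by
      have hkn : γ (n + k) < γ k := by rw [Nat.add_comm]; exact hk2
      have : (γ (n+k) : ℝ) + 1 ≤ γ k := by exact_mod_cast hkn
      linarith
    have hd2 : ParryT γ q (n + k + 1) - 1 ≤ x := hall _ (by omega)
    have hd3 : 0 ≤ ParryT γ q (k + 1) := parryT_nonneg hq _
    have hpow : (0:ℝ) < q ^ (k+1) := by positivity
    have hnum : (γ (n + k) : ℝ) - γ k + (ParryT γ q (n + k + 1) - ParryT γ q (k + 1)) ≤ x := by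
      linarith
    have hxq : x / q ^ (k+1) ≤ x / q :=
      div_le_div_of_nonneg_left hx hq0 (le_self_pow₀ hq.le (by omega))
    calc ParryT γ q n - 1 = _ := hdiff
      _ ≤ x / q ^ (k+1) := div_le_div_of_nonneg_right hnum hpow.le
      _ ≤ x / q := hxq
  -- iterate
  have iter : ∀ j : ℕ, ∀ n, 1 ≤ n → ParryT γ q n - 1 ≤ C / q ^ j := by
    intro j
    induction j with
    | zero =>
      intro n hn
      simp only [pow_zero, div_one]
      have := parryT_le hq hM n
      have h0 := parryT_nonneg (γ := γ) hq n
      linarith [this]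
    | succ j ih =>
      intro n hn
      have hCj : 0 ≤ C / q ^ j := by positivity
      have := step (C / q ^ j) hCj ih n hn
      calc ParryT γ q n - 1 ≤ (C / q ^ j) / q := this
        _ = C / q ^ (j+1) := by rw [div_div, ← pow_succ]
  intro n hn
  have htend : Filter.Tendsto (fun j : ℕ => C / q ^ j) Filter.atTop (nhds 0) := by
    simpa using Filter.Tendsto.const_div_atTop (tendsto_pow_atTop_atTop_of_one_lt hq) C
  have := ge_of_tendsto' htend (fun j => iter j n hn)
  linarith
lemma parryT_lt_one {γ : ℕ → ℕ} {q : ℝ} (hq : 1 < q) {M : ℕ} (hM : ∀ i, γ i ≤ M)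
    (hlex : ∀ j : ℕ, 1 ≤ j → LexLT (fun i => γ (i + j)) γ)
    (hT0 : ParryT γ q 0 = 1) :
    ∀ n, 1 ≤ n → ParryT γ q n < 1 := by
  have hq0 : (0:ℝ) < q := lt_trans one_pos hq
  intro n hn
  obtain ⟨k, hk1, hk2⟩ := hlex n hn
  have hdiff := parry_diff hq hM (n := n) (k := k) hk1
  rw [hT0] at hdiff
  have hd1 : (γ (n + k) : ℝ) - γ k ≤ -1 := by
    have hkn : γ (n + k) < γ k := by rw [Nat.add_comm]; exact hk2
    have : (γ (n+k) : ℝ) + 1 ≤ γ k := by exact_mod_cast hkn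
    linarith
  have hpow : (0:ℝ) < q ^ (k+1) := by positivity
  by_cases hz : ∀ i, γ (k + 1 + i) = 0
  · have hz1 : ParryT γ q (k + 1) = 0 := by
      rw [ParryT]
      have h : ∀ i : ℕ, (γ (k + 1 + i) : ℝ) / q ^ (i + 1) = 0 := by
        intro i; rw [hz i]; simp
      rw [tsum_congr h, tsum_zero]
    have hz2 : ParryT γ q (n + k + 1) = 0 := by
      rw [ParryT]
      have h : ∀ i : ℕ, (γ (n + k + 1 + i) : ℝ) / q ^ (i + 1) = 0 := by
        intro i
        have he : n + k + 1 + i = k + 1 + (n + i) := by omega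
        rw [he, hz (n + i)]; simp
      rw [tsum_congr h, tsum_zero]
    have hnum : (γ (n + k) : ℝ) - γ k + (ParryT γ q (n + k + 1) - ParryT γ q (k + 1)) < 0 := by
      rw [hz1, hz2]; linarith
    have := div_neg_of_neg_of_pos hnum hpow
    linarith [hdiff ▸ this]
  · push_neg at hz
    obtain ⟨i, hi⟩ := hz
    have hi1 : (1:ℝ) ≤ (γ (k + 1 + i) : ℝ) := by exact_mod_cast Nat.one_le_iff_ne_zero.mpr hi
    have hpos : 0 < ParryT γ q (k + 1) := by
      have hterm : (0:ℝ) < (γ (k + 1 + i) : ℝ) / q ^ (i + 1) := by positivity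
      have hle := Summable.le_tsum (parry_summable hq hM (k+1)) i (fun j _ => by positivity)
      exact lt_of_lt_of_le hterm hle
    have hTle : ParryT γ q (n + k + 1) ≤ 1 := parryT_le_one hq hM hlex hT0 _ (by omega)
    have hnum : (γ (n + k) : ℝ) - γ k + (ParryT γ q (n + k + 1) - ParryT γ q (k + 1)) < 0 := by
      linarith
    have := div_neg_of_neg_of_pos hnum hpow
    linarith [hdiff ▸ this]
lemma parry_exists_root {γ : ℕ → ℕ} {M : ℕ} (hM : ∀ i, γ i ≤ M) (hM1 : 1 ≤ M)
    {N : ℕ} (hN : 2 ≤ ∑ i ∈ Finset.range N, γ i) :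
    ∃ q : ℝ, 1 < q ∧ ParryT γ q 0 = 1 := by
  have hN1 : 1 ≤ N := by
    by_contra h
    interval_cases N <;> simp_all
  set b : ℝ := (2:ℝ) ^ ((N:ℝ)⁻¹) with hbdef
  have hNR : (0:ℝ) < (N:ℝ)⁻¹ := by
    have : (0:ℝ) < (N:ℝ) := by exact_mod_cast hN1
    positivity
  have hb1 : 1 < b := by
    rw [hbdef]
    exact Real.one_lt_rpow_iff_of_pos (by norm_num) |>.mpr (Or.inl ⟨by norm_num, hNR⟩)
  have hb0 : (0:ℝ) < b := lt_trans one_pos hb1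
  have hb2 : b ≤ 2 := by
    calc b ≤ (2:ℝ) ^ (1:ℝ) := by
          apply Real.rpow_le_rpow_of_exponent_le (by norm_num)
          rw [inv_le_one_iff₀]
          right; exact_mod_cast hN1
      _ = 2 := Real.rpow_one 2
  have hbN : b ^ N = 2 := by
    rw [hbdef, ← Real.rpow_natCast ((2:ℝ) ^ ((N:ℝ)⁻¹)) N, ← Real.rpow_mul (by norm_num)]
    rw [inv_mul_cancel₀ (by exact_mod_cast Nat.one_le_iff_ne_zero.mp hN1)]
    exact Real.rpow_one 2
  have hM2 : (2:ℝ) ≤ (M:ℝ) + 1 := by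
    have : (1:ℝ) ≤ (M:ℝ) := by exact_mod_cast hM1
    linarith
  have hbM : b ≤ (M:ℝ) + 1 := le_trans hb2 hM2
  have hqM : (1:ℝ) < (M:ℝ) + 1 := by linarith
  -- lower estimate at b
  have hfb : 1 ≤ ParryT γ b 0 := by
    have hsum := parry_summable hb1 hM 0
    have h1 : ∑ i ∈ Finset.range N, (γ (0 + i) : ℝ) / b ^ (i + 1) ≤ ParryT γ b 0 :=
      Summable.sum_le_tsum (Finset.range N) (fun i _ => by positivity) hsum
    have h2 : ∀ i ∈ Finset.range N, (γ (0 + i) : ℝ) / b ^ N ≤ (γ (0 + i) : ℝ) / b ^ (i + 1) := by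
      intro i hi
      exact div_le_div_of_nonneg_left (by positivity) (by positivity)
        (pow_le_pow_right₀ hb1.le (Finset.mem_range.mp hi))
    have h3 : (2:ℝ) / b ^ N ≤ ∑ i ∈ Finset.range N, (γ (0 + i) : ℝ) / b ^ N := by
      rw [← Finset.sum_div]
      apply div_le_div_of_nonneg_right ?_ (by positivity) |>.trans_eq rfl
      have : ((∑ i ∈ Finset.range N, γ i : ℕ) : ℝ) = ∑ i ∈ Finset.range N, (γ (0 + i) : ℝ) := by
        push_cast
        simp
      rw [← this]
      exact_mod_cast hN
    have h4 : (2:ℝ) / b ^ N = 1 := by rw [hbN]; norm_num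
    calc (1:ℝ) = 2 / b ^ N := h4.symm
      _ ≤ ∑ i ∈ Finset.range N, (γ (0 + i) : ℝ) / b ^ N := h3
      _ ≤ ∑ i ∈ Finset.range N, (γ (0 + i) : ℝ) / b ^ (i + 1) := Finset.sum_le_sum h2
      _ ≤ ParryT γ b 0 := h1
  -- upper estimate at M + 1
  have hfM : ParryT γ ((M:ℝ) + 1) 0 ≤ 1 := by
    have := parryT_le hqM hM 0
    have hMne : (M:ℝ) ≠ 0 := by
      have : (1:ℝ) ≤ (M:ℝ) := by exact_mod_cast hM1
      linarith
    have he : (M:ℝ) / ((M:ℝ) + 1 - 1) = 1 := by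
      rw [add_sub_cancel_right, div_self hMne]
    linarith [he ▸ this]
  -- continuity on [b, M+1]
  have hcont : ContinuousOn (fun x : ℝ => ParryT γ x 0) (Set.Icc b ((M:ℝ)+1)) := by
    simp only [ParryT]
    apply continuousOn_tsum (u := fun i => (M:ℝ) * (1/b) * (1/b)^i)
    · intro i
      apply ContinuousOn.div continuousOn_const (continuous_pow (i+1)).continuousOn
      intro x hx
      have : 0 < x := lt_of_lt_of_le hb0 hx.1
      positivity
    · have h1 : (0:ℝ) ≤ 1/b := by positivity
      have h2 : 1/b < 1 := by rw [div_lt_one hb0]; exact hb1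
      exact (summable_geometric_of_lt_one h1 h2).mul_left _
    · intro i x hx
      have hx0 : 0 < x := lt_of_lt_of_le hb0 hx.1
      rw [Real.norm_eq_abs, abs_of_nonneg (by positivity)]
      have hbx : b ^ (i+1) ≤ x ^ (i+1) := pow_le_pow_left₀ hb0.le hx.1 (i+1)
      have hγ : (γ (0 + i) : ℝ) ≤ (M:ℝ) := by exact_mod_cast hM (0+i)
      calc (γ (0 + i) : ℝ) / x ^ (i+1) ≤ (M:ℝ) / x ^ (i+1) :=
            div_le_div_of_nonneg_right hγ (by positivity) |>.trans_eq rfl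
        _ ≤ (M:ℝ) / b ^ (i+1) :=
            div_le_div_of_nonneg_left (by positivity) (by positivity) hbx
        _ = (M:ℝ) * (1/b) * (1/b)^i := by
            rw [mul_assoc, ← pow_succ', one_div_pow, mul_one_div]
  -- IVT
  have hsub := intermediate_value_Icc' hbM hcont
  have h1mem : (1:ℝ) ∈ Set.Icc (ParryT γ ((M:ℝ)+1) 0) (ParryT γ b 0) := ⟨hfM, hfb⟩
  obtain ⟨q, hqmem, hfq⟩ := hsub h1mem
  exact ⟨q, lt_of_lt_of_le hb1 hqmem.1, hfq⟩
lemma parry_backward {γ : ℕ → ℕ}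
    (hlex : ∀ j : ℕ, 1 ≤ j → LexLT (fun i => γ (i + j)) γ) :
    ∃ q : ℝ, 1 ≤ q ∧ IsGreedy q γ := by
  have hM : ∀ i, γ i ≤ γ 0 := parry_digit_le hlex
  have hγ0 : 1 ≤ γ 0 := by
    by_contra h
    have h0 : γ 0 = 0 := by omega
    obtain ⟨k, -, hk2⟩ := hlex 1 le_rfl
    have := hM k
    have := hM (k+1)
    simp only at hk2
    omega
  by_cases hbig : ∃ N, 2 ≤ ∑ i ∈ Finset.range N, γ i
  · obtain ⟨N, hN⟩ := hbig
    obtain ⟨q, hq, hT0⟩ := parry_exists_root hM hγ0 hN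
    have hq0 : (0:ℝ) < q := lt_trans one_pos hq
    refine ⟨q, hq.le, ?_⟩
    intro n
    have hPT : (∑ i ∈ Finset.range n, (γ i : ℝ) / q ^ (i + 1)) + ParryT γ q n / q ^ n = 1 := by
      have := parryT_split hq hM 0 n
      simp only [Nat.zero_add] at this
      rw [← this, hT0]
    have hrec := parryT_rec hq hM n
    have hTn1 : 0 ≤ ParryT γ q (n+1) := parryT_nonneg hq _
    have hpn : (0:ℝ) < q ^ n := by positivity
    have hpn1 : (0:ℝ) < q ^ (n+1) := by positivity
    constructor
    · -- membership
      show (∑ i ∈ Finset.range n, (γ i : ℝ) / q ^ (i + 1)) + (γ n : ℝ) / q ^ (n + 1) ≤ 1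
      have h1 : (γ n : ℝ) / q ^ (n+1) ≤ ParryT γ q n / q ^ n := by
        rw [hrec, div_div, pow_succ, mul_comm q (q ^ n)]
        exact div_le_div_of_nonneg_right (by linarith) (by positivity)
      linarith
    · -- upper bound
      intro k hk
      simp only [Set.mem_setOf_eq] at hk
      have h1 : (k : ℝ) / q ^ (n+1) ≤ ParryT γ q n / q ^ n := by linarith
      have h2 : (k : ℝ) ≤ q * ParryT γ q n := by
        rw [pow_succ] at h1
        rw [div_le_div_iff₀ (by positivity) hpn] at h1
        have := mul_le_mul_of_nonneg_right h1 (le_of_lt (inv_pos.mpr hpn))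
        calc (k:ℝ) = (k:ℝ) * q ^ n * (q ^ n)⁻¹ := by field_simp
          _ ≤ ParryT γ q n * (q ^ n * q) * (q ^ n)⁻¹ := by
              apply mul_le_mul_of_nonneg_right h1 (le_of_lt (inv_pos.mpr hpn))
          _ = q * ParryT γ q n := by field_simp
      have h3 : q * ParryT γ q n = (γ n : ℝ) + ParryT γ q (n+1) := by
        rw [hrec]; field_simp
      have h4 : ParryT γ q (n+1) < 1 := parryT_lt_one hq hM hlex hT0 (n+1) (by omega)
      have h5 : (k:ℝ) < (γ n : ℝ) + 1 := by linarith
      have : k < γ n + 1 := by exact_mod_cast h5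
      omega
  · -- the trivial expansion 1, 0, 0, ...
    push_neg at hbig
    have hγ01 : γ 0 = 1 := by
      have := hbig 1
      simp only [Finset.sum_range_one] at this
      omega
    have hzero : ∀ i, 1 ≤ i → γ i = 0 := by
      intro i hi
      have h1 := hbig (i+1)
      have h2 : γ 0 ≤ ∑ j ∈ Finset.range i, γ j :=
        Finset.single_le_sum (fun j _ => Nat.zero_le _) (Finset.mem_range.mpr hi)
      rw [Finset.sum_range_succ] at h1
      omega
    refine ⟨1, le_rfl, ?_⟩
    have hsum : ∀ n, 1 ≤ n → (∑ i ∈ Finset.range n, (γ i : ℝ) / (1:ℝ) ^ (i + 1)) = 1 := by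
      intro n hn
      induction n with
      | zero => omega
      | succ m ih =>
        rcases Nat.eq_zero_or_pos m with hm | hm
        · subst hm
          simp [hγ01]
        · rw [Finset.sum_range_succ, ih hm, hzero m hm]
          simp
    intro n
    rcases Nat.eq_zero_or_pos n with hn | hn
    · subst hn
      constructor
      · show (∑ i ∈ Finset.range 0, (γ i : ℝ) / (1:ℝ) ^ (i + 1)) + (γ 0 : ℝ) / (1:ℝ) ^ (0 + 1) ≤ 1
        simp [hγ01]
      · intro k hk
        simp only [Set.mem_setOf_eq, Finset.range_zero, Finset.sum_empty, zero_add,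
          one_pow, div_one] at hk
        rw [hγ01]
        exact_mod_cast hk
    · constructor
      · show (∑ i ∈ Finset.range n, (γ i : ℝ) / (1:ℝ) ^ (i + 1)) + (γ n : ℝ) / (1:ℝ) ^ (n + 1) ≤ 1
        rw [hsum n hn, hzero n hn]
        simp
      · intro k hk
        simp only [Set.mem_setOf_eq] at hk
        rw [hsum n hn] at hk
        simp only [one_pow, div_one] at hk
        have hk0 : (k:ℝ) ≤ 0 := by linarith
        have hk1 : k = 0 := by exact_mod_cast le_antisymm hk0 (Nat.cast_nonneg k)
        rw [hk1]
        exact Nat.zero_le _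
lemma parry_forward_one {γ : ℕ → ℕ} (hg : IsGreedy 1 γ) :
    ∀ j : ℕ, 1 ≤ j → LexLT (fun i => γ (i + j)) γ := by
  have hγ0 : γ 0 = 1 := by
    have h1 := (hg 0).1
    simp only [Set.mem_setOf_eq, Finset.range_zero, Finset.sum_empty, zero_add, one_pow,
      div_one] at h1
    have h2 : 1 ≤ γ 0 := (hg 0).2 (by
      simp only [Set.mem_setOf_eq, Finset.range_zero, Finset.sum_empty, zero_add, one_pow,
        div_one, Nat.cast_one, le_refl])
    have : γ 0 ≤ 1 := by exact_mod_cast h1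
    omega
  have key : ∀ n, 1 ≤ n → (∑ i ∈ Finset.range n, (γ i : ℝ) / (1:ℝ) ^ (i + 1)) = 1 ∧ γ n = 0 := by
    intro n hn
    induction n with
    | zero => omega
    | succ m ih =>
      have hP : (∑ i ∈ Finset.range (m+1), (γ i : ℝ) / (1:ℝ) ^ (i + 1)) = 1 := by
        rcases Nat.eq_zero_or_pos m with hm | hm
        · subst hm; simp [hγ0]
        · obtain ⟨hPm, hγm⟩ := ih hm
          rw [Finset.sum_range_succ, hPm, hγm]
          simp
      refine ⟨hP, ?_⟩
      have h1 := (hg (m+1)).1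
      simp only [Set.mem_setOf_eq] at h1
      rw [hP] at h1
      simp only [one_pow, div_one] at h1
      have : (γ (m+1) : ℝ) ≤ 0 := by linarith
      exact_mod_cast le_antisymm this (Nat.cast_nonneg _)
  intro j hj
  refine ⟨0, fun i hi => absurd hi (by omega), ?_⟩
  show γ (0 + j) < γ 0
  rw [Nat.zero_add, (key j hj).2, hγ0]
  omega

lemma parry_forward_gt {γ : ℕ → ℕ} {q : ℝ} (hq : 1 < q) (hg : IsGreedy q γ) :
    ∀ j : ℕ, 1 ≤ j → LexLT (fun i => γ (i + j)) γ := by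
  have hq0 : (0:ℝ) < q := lt_trans one_pos hq
  set P : ℕ → ℝ := fun n => ∑ i ∈ Finset.range n, (γ i : ℝ) / q ^ (i + 1) with hP
  set s : ℕ → ℝ := fun n => q ^ n * (1 - P n) with hs
  have hs0 : s 0 = 1 := by simp [hs, hP]
  have hqs : ∀ n, q ^ (n+1) * (1 - P n) = q * s n := by
    intro n; rw [hs, pow_succ]; ring
  have hlow : ∀ n, (γ n : ℝ) ≤ q * s n := by
    intro n
    have h1 := (hg n).1
    simp only [Set.mem_setOf_eq] at h1
    rw [← hqs]
    have hpow : (0:ℝ) < q ^ (n+1) := by positivity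
    have hPe : P n = ∑ i ∈ Finset.range n, (γ i : ℝ) / q ^ (i + 1) := rfl
    have h2 : (γ n : ℝ) / q ^ (n+1) ≤ 1 - P n := by linarith [hPe ▸ h1]
    calc (γ n : ℝ) = (γ n : ℝ) / q ^ (n+1) * q ^ (n+1) := by field_simp
      _ ≤ (1 - P n) * q ^ (n+1) := mul_le_mul_of_nonneg_right h2 hpow.le
      _ = q ^ (n+1) * (1 - P n) := mul_comm _ _
  have hub : ∀ n, q * s n < (γ n : ℝ) + 1 := by
    intro n
    by_contra h
    push_neg at h
    have hpow : (0:ℝ) < q ^ (n+1) := by positivity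
    rw [← hqs] at h
    have hmem : (γ n + 1 : ℕ) ∈ {k : ℕ |
        (∑ i ∈ Finset.range n, (γ i : ℝ) / q ^ (i + 1)) + (k : ℝ) / q ^ (n + 1) ≤ 1} := by
      simp only [Set.mem_setOf_eq]
      push_cast
      show P n + ((γ n : ℝ) + 1) / q ^ (n + 1) ≤ 1
      have h2 : ((γ n : ℝ) + 1) / q ^ (n+1) ≤ 1 - P n := by
        rw [div_le_iff₀ hpow, mul_comm]
        exact h
      linarith
    have := (hg n).2 hmem
    omega
  have hsrec : ∀ n, s (n+1) = q * s n - γ n := by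
    intro n
    have hpow : (0:ℝ) < q ^ (n+1) := by positivity
    have hPn : P (n+1) = P n + (γ n : ℝ) / q ^ (n+1) := by
      rw [hP]; exact Finset.sum_range_succ _ n
    rw [hs]
    simp only
    rw [hPn, ← hqs]
    field_simp
    ring
  have hsnn : ∀ n, 0 ≤ s n := by
    intro n
    cases n with
    | zero => rw [hs0]; norm_num
    | succ m => rw [hsrec m]; linarith [hlow m]
  have hslt : ∀ n, 1 ≤ n → s n < 1 := by
    intro n hn
    cases n with
    | zero => omega
    | succ m => rw [hsrec m]; linarith [hub m]
  have hsle : ∀ n, s n ≤ 1 := by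
    intro n
    cases n with
    | zero => exact le_of_eq hs0
    | succ m => exact (hslt (m+1) (by omega)).le
  have hdiff : ∀ j i : ℕ, (∀ i' < i, γ (i' + j) = γ i') →
      s (i + j) - s i = q ^ i * (s j - 1) := by
    intro j i
    induction i with
    | zero =>
      intro _
      rw [Nat.zero_add, hs0, pow_zero, one_mul]
    | succ i ih =>
      intro h
      have e1 : i + 1 + j = (i + j) + 1 := by omega
      rw [e1, hsrec (i + j), hsrec i, h i (by omega)]
      have := ih (fun i' hi' => h i' (by omega))
      rw [pow_succ']
      nlinarith [this]
  intro j hj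
  have hsj : s j < 1 := hslt j hj
  have h1sj : 0 < 1 - s j := by linarith
  have hne : ∃ k, γ (k + j) ≠ γ k := by
    by_contra h
    push_neg at h
    obtain ⟨i, hi⟩ := pow_unbounded_of_one_lt ((1 - s j)⁻¹) hq
    have hd := hdiff j i (fun i' _ => h i')
    have h2 : 1 < q ^ i * (1 - s j) := by
      rw [← div_lt_iff₀ h1sj] at *
      calc (1:ℝ) / (1 - s j) = (1 - s j)⁻¹ := one_div _
        _ < q ^ i := hi
    have h3 : s (i + j) - s i ≥ -1 := by
      have := hsnn (i + j)
      have := hsle i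
      linarith
    nlinarith [hd]
  classical
  have hkspec : γ (Nat.find hne + j) ≠ γ (Nat.find hne) := Nat.find_spec hne
  have hkmin : ∀ i < Nat.find hne, γ (i + j) = γ i := by
    intro i hi
    by_contra hcon
    exact absurd hi (not_lt.mpr (Nat.find_le hcon))
  have hd := hdiff j (Nat.find hne) hkmin
  have hdneg : s (Nat.find hne + j) < s (Nat.find hne) := by
    have hqk : (0:ℝ) < q ^ (Nat.find hne) := by positivity
    nlinarith [hd]
  have hchain : (γ (Nat.find hne + j) : ℝ) < (γ (Nat.find hne) : ℝ) + 1 := by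
    calc (γ (Nat.find hne + j) : ℝ) ≤ q * s (Nat.find hne + j) := hlow _
      _ < q * s (Nat.find hne) := by exact mul_lt_mul_of_pos_left hdneg hq0
      _ < (γ (Nat.find hne) : ℝ) + 1 := hub _
  have hle : γ (Nat.find hne + j) < γ (Nat.find hne) + 1 := by exact_mod_cast hchain
  refine ⟨Nat.find hne, hkmin, ?_⟩
  show γ (Nat.find hne + j) < γ (Nat.find hne)
  omega

/-- Parry's characterization: a sequence is the greedy `q`-expansion for some
`q ≥ 1` iff every shifted sequence is lexicographically strictly smaller. -/
theorem greedy_iff_lex (γ : ℕ → ℕ) :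
    (∃ q : ℝ, 1 ≤ q ∧ IsGreedy q γ) ↔
      (∀ j : ℕ, 1 ≤ j → LexLT (fun i => γ (i + j)) γ) := by
  constructor
  · rintro ⟨q, hq, hg⟩
    rcases eq_or_lt_of_le hq with h | h
    · exact parry_forward_one (h ▸ hg)
    · exact parry_forward_gt h hg
  · exact parry_backward
end

section
/- A sequence (α_i)_{i≥1} of nonnegative integers is the quasi-greedy q-expansion for some real number q > 1 if and only if it has infinitely many nonzero terms and satisfies α_{j+1} α_{j+2} … ≤ α_1 α_2 … lexicographically for all j ≥ 1. -/
open Filter Finset Topology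

/-- Totality of the lexicographic order. -/
lemma lexLE_total' (a b : ℕ → ℕ) : LexLE a b ∨ LexLT b a := by
  classical
  by_cases h : a = b
  · exact Or.inl (Or.inr h)
  · have hex : ∃ n, a n ≠ b n := by
      by_contra hc
      push_neg at hc
      exact h (funext hc)
    have hspec : a (Nat.find hex) ≠ b (Nat.find hex) := Nat.find_spec hex
    have hmin : ∀ i < Nat.find hex, a i = b i := by
      intro i hi
      by_contra hne
      exact (Nat.find_min hex hi) hne
    rcases lt_or_gt_of_ne hspec with h1 | h1
    · exact Or.inl (Or.inl ⟨_, hmin, h1⟩)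
    · exact Or.inr ⟨_, fun i hi => (hmin i hi).symm, h1⟩

set_option maxHeartbeats 1000000 in
/-- A sequence is the quasi-greedy `q`-expansion for some `q > 1` iff it has
infinitely many nonzero terms and every shifted sequence is lexicographically
less than or equal to the sequence itself. -/
theorem quasiGreedy_iff_lex (α : ℕ → ℕ) :
    (∃ q : ℝ, 1 < q ∧ IsQuasiGreedy q α) ↔
      ((∀ N : ℕ, ∃ n ≥ N, α n ≠ 0) ∧
        ∀ j : ℕ, 1 ≤ j → LexLE (fun i => α (i + j)) α) := by
  constructor
  · -- Forward direction
    rintro ⟨q, hq, hqg⟩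
    have hq0 : (0:ℝ) < q := lt_trans one_pos hq
    have hqne : q ≠ 0 := ne_of_gt hq0
    have hdiv : ∀ (c : ℝ) (s t : ℕ), q ^ t * (c / q ^ (s + t)) = c / q ^ s := by
      intro c s t
      rw [pow_add]
      field_simp
    have hdiv2 : ∀ (c : ℝ) (s t : ℕ), c / q ^ (s + t) = (1/q) ^ t * (c / q ^ s) := by
      intro c s t
      rw [div_pow, one_pow, pow_add, div_mul_div_comm, one_mul, mul_comm (q^t) (q^s)]
    have hqinv0 : (0:ℝ) ≤ 1/q := by positivity
    have hqinv1 : 1/q < 1 := by rw [div_lt_one hq0]; exact hq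
    set a : ℕ → ℝ := fun i => (α i : ℝ) / q ^ (i + 1) with ha
    have hanonneg : ∀ i, 0 ≤ a i := fun i => by positivity
    set S : ℕ → ℝ := fun n => ∑ i ∈ Finset.range n, a i with hS
    have hmem : ∀ n, S n + (α n : ℝ) / q ^ (n + 1) < 1 := fun n => (hqg n).1
    have hub : ∀ n, 1 ≤ S n + ((α n : ℝ) + 1) / q ^ (n + 1) := by
      intro n
      by_contra h
      push_neg at h
      have h2 : α n + 1 ≤ α n := (hqg n).2 (by
        show S n + ((α n + 1 : ℕ) : ℝ) / q ^ (n+1) < 1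
        push_cast
        exact h)
      omega
    have hSsucc : ∀ n, S (n+1) = S n + a n := fun n => Finset.sum_range_succ a n
    have hSlt : ∀ n, S n < 1 := by
      intro n
      have h1 := hmem n
      have h2 : (0:ℝ) ≤ (α n : ℝ) / q ^ (n+1) := by positivity
      linarith
    have hF2 : ∀ n, 1 - (1/q) ^ (n+1) ≤ S (n+1) := by
      intro n
      have h1 := hub n
      have h2 := hSsucc n
      have h3 : ((α n:ℝ)+1)/q^(n+1) = (α n:ℝ)/q^(n+1) + 1/q^(n+1) := by ring
      have h4 : (1/q:ℝ)^(n+1) = 1/q^(n+1) := by rw [div_pow, one_pow]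
      have h5 : a n = (α n:ℝ)/q^(n+1) := rfl
      rw [h4]
      linarith
    have hinf : ∀ N, ∃ n ≥ N, α n ≠ 0 := by
      intro N
      by_contra hc
      push_neg at hc
      have hconst : ∀ m, S (N + m) = S N := by
        intro m
        induction m with
        | zero => rfl
        | succ m ih =>
          have h0 : α (N + m) = 0 := hc (N+m) (Nat.le_add_right _ _)
          have ha0 : a (N+m) = 0 := by simp [ha, h0]
          have h1 : S (N + (m+1)) = S (N+m) + a (N+m) := hSsucc (N+m)
          rw [h1, ha0, ih, add_zero]
      obtain ⟨k, hk⟩ := exists_pow_lt_of_lt_one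
        (show (0:ℝ) < 1 - S N by linarith [hSlt N]) hqinv1
      have h1 := hF2 (N + k)
      have h2 : S (N + k + 1) = S N := hconst (k+1)
      have h3 : (1/q:ℝ)^(N+k+1) ≤ (1/q)^k :=
        pow_le_pow_of_le_one hqinv0 hqinv1.le (by omega)
      linarith
    have hSle1 : ∀ n, S n ≤ 1 := fun n => (hSlt n).le
    have hsum : Summable a := summable_of_sum_range_le hanonneg hSle1
    have htsum_le : ∑' i, a i ≤ 1 := Summable.tsum_le_of_sum_range_le hsum hSle1
    have htsum : ∑' i, a i = 1 := by
      by_contra hne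
      have hlt : ∑' i, a i < 1 := lt_of_le_of_ne htsum_le hne
      obtain ⟨k, hk⟩ := exists_pow_lt_of_lt_one
        (show (0:ℝ) < 1 - ∑' i, a i by linarith) hqinv1
      have h1 : S (k+1) ≤ ∑' i, a i := Summable.sum_le_tsum _ (fun i _ => hanonneg i) hsum
      have h2 := hF2 k
      have h3 : (1/q:ℝ)^(k+1) ≤ (1/q)^k :=
        pow_le_pow_of_le_one hqinv0 hqinv1.le (Nat.le_succ k)
      linarith
    have hsumtail : ∀ j, Summable (fun i => (α (i+j):ℝ) / q ^ (i+1)) := by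
      intro j
      have h1 : Summable (fun i => a (i + j)) := (summable_nat_add_iff j).2 hsum
      have h2 := h1.mul_left (q ^ j)
      refine h2.congr (fun i => ?_)
      show q ^ j * ((α (i+j):ℝ) / q ^ (i + j + 1)) = (α (i+j):ℝ) / q ^ (i+1)
      rw [show i + j + 1 = (i+1) + j from by omega]
      exact hdiv _ _ _
    set G : ℕ → ℝ := fun j => ∑' i, (α (i+j):ℝ) / q ^ (i+1) with hG
    have hGnonneg : ∀ j, 0 ≤ G j := fun j => tsum_nonneg (fun i => by positivity)
    have htail : ∀ j, ∑' i, a (i + j) = (1/q)^j * G j := by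
      intro j
      rw [hG]
      simp only []
      rw [← tsum_mul_left]
      refine tsum_congr (fun i => ?_)
      show (α (i+j):ℝ) / q ^ (i + j + 1) = (1/q) ^ j * ((α (i+j):ℝ) / q ^ (i+1))
      rw [show i + j + 1 = (i+1) + j from by omega]
      exact hdiv2 _ _ _
    have hGform : ∀ j, S j + (1/q)^j * G j = 1 := fun j => by
      rw [← htail j, ← htsum]
      exact Summable.sum_add_tsum_nat_add j hsum
    have hGle1 : ∀ j, 1 ≤ j → G j ≤ 1 := by
      intro j hj
      obtain ⟨n, rfl⟩ : ∃ n, j = n + 1 := ⟨j - 1, by omega⟩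
      have h1 := hGform (n+1)
      have h2 := hF2 n
      have hp : (0:ℝ) < (1/q)^(n+1) := by positivity
      nlinarith
    have hGpos : ∀ j, 0 < G j := by
      intro j
      have h1 := hGform j
      have h2 := hSlt j
      have hp : (0:ℝ) < (1/q)^j := by positivity
      nlinarith
    have hsplitF : ∀ j m, G j = (∑ i ∈ Finset.range m, (α (i+j):ℝ)/q^(i+1))
        + (1/q)^m * G (m+j) := by
      intro j m
      rw [hG]
      simp only []
      rw [← Summable.sum_add_tsum_nat_add m (hsumtail j)]
      congr 1
      rw [← tsum_mul_left]
      refine tsum_congr (fun i => ?_)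
      show (α (i+m+j):ℝ) / q ^ (i + m + 1) = (1/q) ^ m * ((α (i+(m+j)):ℝ) / q ^ (i+1))
      rw [show i + m + j = i + (m+j) from by omega,
        show i + m + 1 = (i+1) + m from by omega]
      exact hdiv2 _ _ _
    refine ⟨hinf, ?_⟩
    intro j hj
    rcases lexLE_total' (fun i => α (i + j)) α with h | h
    · exact h
    obtain ⟨n, heq, hlt⟩ := h
    exfalso
    have heq' : ∀ i < n, α i = α (i + j) := heq
    have hlt' : α n < α (n + j) := hlt
    have h1 := hsplitF j (n+1)
    have hcong : ∑ i ∈ Finset.range n, (α (i+j):ℝ)/q^(i+1) = S n := by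
      refine Finset.sum_congr rfl (fun i hi => ?_)
      show (α (i+j):ℝ)/q^(i+1) = (α i:ℝ)/q^(i+1)
      rw [← heq' i (Finset.mem_range.1 hi)]
    have hcast : (α n:ℝ) + 1 ≤ (α (n+j):ℝ) := by
      have : α n + 1 ≤ α (n+j) := hlt'
      exact_mod_cast this
    have hpart : S n + ((α n:ℝ)+1)/q^(n+1)
        ≤ ∑ i ∈ Finset.range (n+1), (α (i+j):ℝ)/q^(i+1) := by
      rw [Finset.sum_range_succ, hcong]
      have hd : ((α n:ℝ)+1)/q^(n+1) ≤ (α (n+j):ℝ)/q^(n+1) := by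
        exact div_le_div_of_nonneg_right hcast (by positivity)
      linarith [hd]
    have htailpos : 0 < (1/q:ℝ)^(n+1) * G (n+1+j) :=
      mul_pos (by positivity) (hGpos (n+1+j))
    have hG1 := hGle1 j hj
    linarith [hub n]
  · -- Backward direction
    rintro ⟨hinf, hlex⟩
    have hbound : ∀ j, α j ≤ α 0 := by
      intro j
      rcases Nat.eq_zero_or_pos j with rfl | hj
      · exact le_refl _
      rcases hlex j hj with h | h
      · obtain ⟨n, heq, hlt⟩ := h
        rcases Nat.eq_zero_or_pos n with rfl | hn
        · have : α (0 + j) < α 0 := hlt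
          simpa using this.le
        · have h0 : α (0 + j) = α 0 := heq 0 hn
          simpa using h0.le
      · have h0 : α (0 + j) = α 0 := congrFun h 0
        simpa using h0.le
    obtain ⟨n0, hn0ge, hn0⟩ := hinf 1
    have hα0 : 1 ≤ α 0 := le_trans (Nat.one_le_iff_ne_zero.2 hn0) (hbound n0)
    set N := n0 + 1 with hN
    have hsum2 : 2 ≤ ∑ i ∈ Finset.range N, α i := by
      have h01 : ({0, n0} : Finset ℕ) ⊆ Finset.range N := by
        intro i hi
        simp only [Finset.mem_insert, Finset.mem_singleton] at hi
        rcases hi with rfl | rfl <;> simp [hN] <;> omega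
      have h2 := Finset.sum_le_sum_of_subset h01 (f := α)
      rw [Finset.sum_pair (by omega : (0:ℕ) ≠ n0)] at h2
      have hn01 : 1 ≤ α n0 := Nat.one_le_iff_ne_zero.2 hn0
      omega
    set p : ℝ → ℝ := fun x => ∑ i ∈ Finset.range N, (α i:ℝ) * x^(i+1) with hp
    have hpcont : Continuous p := by
      apply continuous_finset_sum
      intro i _
      continuity
    have hp1 : 2 ≤ p 1 := by
      rw [hp]
      simp only [one_pow, mul_one]
      rw [← Nat.cast_sum]
      exact_mod_cast hsum2
    have hnb : (nhdsWithin (1:ℝ) (Set.Ioo 0 1)).NeBot := right_nhdsWithin_Ioo_neBot one_pos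
    have hev : ∀ᶠ x in nhdsWithin (1:ℝ) (Set.Ioo 0 1), 1 < p x := by
      have ht : Tendsto p (nhdsWithin (1:ℝ) (Set.Ioo 0 1)) (nhds (p 1)) :=
        (hpcont.continuousAt).continuousWithinAt.tendsto
      exact ht.eventually (eventually_gt_nhds (by linarith))
    obtain ⟨r, hr1, hrI⟩ := (hev.and eventually_mem_nhdsWithin).exists
    obtain ⟨hr0, hrlt1⟩ := hrI
    -- summability helper
    have hsummul : ∀ (β : ℕ → ℕ) (x:ℝ), 0 ≤ x → x < 1 → (∀ i, β i ≤ α 0) →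
        Summable (fun i => (β i:ℝ) * x^(i+1)) := by
      intro β x hx0 hx1 hb
      have hgeo : Summable (fun i : ℕ => (α 0:ℝ) * x^i) :=
        (summable_geometric_of_lt_one hx0 hx1).mul_left _
      have hgeo' : Summable (fun i : ℕ => (α 0:ℝ) * x^(i+1)) :=
        (summable_nat_add_iff 1).2 hgeo
      refine Summable.of_nonneg_of_le (fun i => by positivity) (fun i => ?_) hgeo'
      exact mul_le_mul_of_nonneg_right (by exact_mod_cast hb i) (by positivity)
    set g : ℝ → ℝ := fun x => ∑' i, (α i:ℝ) * x^(i+1) with hg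
    have hgcont : ContinuousOn g (Set.Icc (0:ℝ) r) := by
      rw [continuousOn_iff_continuous_restrict]
      apply continuous_tsum (u := fun i => (α 0:ℝ) * r^(i+1))
        (f := fun i (x : Set.Icc (0:ℝ) r) => (α i:ℝ) * (x:ℝ)^(i+1))
      · intro i
        continuity
      · have hgeo : Summable (fun i : ℕ => (α 0:ℝ) * r^i) :=
          (summable_geometric_of_lt_one hr0.le hrlt1).mul_left _
        exact (summable_nat_add_iff 1).2 hgeo
      · rintro i ⟨x, hx0, hxr⟩
        rw [Real.norm_eq_abs, abs_of_nonneg (by positivity)]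
        exact mul_le_mul (by exact_mod_cast hbound i)
          (pow_le_pow_left₀ hx0 hxr _) (by positivity) (Nat.cast_nonneg _)
    have hg0 : g 0 = 0 := by
      rw [hg]
      simp
    have hgr : 1 < g r := by
      refine lt_of_lt_of_le hr1 ?_
      exact Summable.sum_le_tsum (Finset.range N) (fun i _ => by positivity)
        (hsummul α r hr0.le hrlt1 hbound)
    have h1mem : (1:ℝ) ∈ Set.Icc (g 0) (g r) := by
      rw [hg0]
      exact ⟨zero_le_one, hgr.le⟩
    obtain ⟨x, hxmem, hgx⟩ := intermediate_value_Icc hr0.le hgcont h1mem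
    obtain ⟨hx0, hxr⟩ := hxmem
    have hxpos : 0 < x := by
      rcases hx0.lt_or_eq with h | h
      · exact h
      · exfalso
        rw [← h] at hgx
        rw [hg0] at hgx
        norm_num at hgx
    have hxlt1 : x < 1 := lt_of_le_of_lt hxr hrlt1
    have hq1 : 1 < x⁻¹ := by
      have h1 : 0 < x⁻¹ := inv_pos.2 hxpos
      have h2 : x * x⁻¹ = 1 := mul_inv_cancel₀ (ne_of_gt hxpos)
      nlinarith
    have hsumG : ∀ j:ℕ, Summable (fun i => (α (i+j):ℝ) * x^(i+1)) :=
      fun j => hsummul _ x hxpos.le hxlt1 (fun i => hbound (i+j))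
    have hsplit : ∀ j m, (∑' i, (α (i+j):ℝ) * x^(i+1)) =
        (∑ i ∈ Finset.range m, (α (i+j):ℝ) * x^(i+1))
          + x^m * ∑' i, (α (i+(m+j)):ℝ) * x^(i+1) := by
      intro j m
      rw [← Summable.sum_add_tsum_nat_add m (hsumG j)]
      congr 1
      rw [← tsum_mul_left]
      refine tsum_congr (fun i => ?_)
      rw [show i + m + j = i + (m+j) from by omega,
        show i + m + 1 = (i+1) + m from by omega, pow_add]
      ring
    have hone : ∀ m, (∑ i ∈ Finset.range m, (α i:ℝ)*x^(i+1))
        + x^m * (∑' i, (α (i+m):ℝ)*x^(i+1)) = 1 := by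
      intro m
      have h0 := hsplit 0 m
      simp only [Nat.add_zero] at h0
      rw [← h0]
      exact hgx
    have hSle : ∀ m, (∑ i ∈ Finset.range m, (α i:ℝ)*x^(i+1)) ≤ 1 := by
      intro m
      have h0 := hone m
      have h1 : 0 ≤ x^m * (∑' i, (α (i+m):ℝ)*x^(i+1)) :=
        mul_nonneg (by positivity) (tsum_nonneg (fun i => by positivity))
      linarith
    set C : ℝ := (α 0:ℝ) * (x * (1-x)⁻¹) with hC
    have hC0 : 0 ≤ C := by
      have : (0:ℝ) ≤ (1-x)⁻¹ := inv_nonneg.2 (by linarith)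
      positivity
    have hGleC : ∀ j, (∑' i, (α (i+j):ℝ) * x^(i+1)) ≤ C := by
      intro j
      have h1 : ∀ i, (α (i+j):ℝ) * x^(i+1) ≤ (α 0:ℝ) * x^(i+1) :=
        fun i => mul_le_mul_of_nonneg_right (by exact_mod_cast hbound (i+j)) (by positivity)
      have hgeo : Summable (fun i : ℕ => (α 0:ℝ) * x^(i+1)) :=
        (summable_nat_add_iff 1).2 ((summable_geometric_of_lt_one hxpos.le hxlt1).mul_left _)
      have h2 := Summable.tsum_le_tsum h1 (hsumG j) hgeo
      refine le_trans h2 (le_of_eq ?_)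
      have h3 : ∀ i : ℕ, (α 0:ℝ) * x^(i+1) = ((α 0:ℝ) * x) * x^i := by
        intro i
        rw [pow_succ]
        ring
      rw [tsum_congr h3, tsum_mul_left, tsum_geometric_of_lt_one hxpos.le hxlt1, hC]
      ring
    have key : ∀ k j, 1 ≤ j → (∑' i, (α (i+j):ℝ) * x^(i+1)) ≤ 1 + C * x^k := by
      intro k
      induction k with
      | zero =>
        intro j hj
        have := hGleC j
        simp only [pow_zero, mul_one]
        linarith
      | succ k ih =>
        intro j hj
        rcases hlex j hj with h | h
        · obtain ⟨n, heq, hlt⟩ := h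
          have heq' : ∀ i < n, α (i + j) = α i := heq
          have hlt' : α (n + j) < α n := hlt
          have h1 := hsplit j (n+1)
          have hcong : ∑ i ∈ Finset.range n, (α (i+j):ℝ)*x^(i+1)
              = ∑ i ∈ Finset.range n, (α i:ℝ)*x^(i+1) :=
            Finset.sum_congr rfl (fun i hi => by rw [heq' i (Finset.mem_range.1 hi)])
          have hle : (α (n+j):ℝ) ≤ (α n:ℝ) - 1 := by
            have h2 : α (n+j) + 1 ≤ α n := hlt'
            have h3 : (α (n+j):ℝ) + 1 ≤ (α n:ℝ) := by exact_mod_cast h2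
            linarith
          have hxp1 : (0:ℝ) ≤ x^(n+1) := by positivity
          have hpart : (∑ i ∈ Finset.range (n+1), (α (i+j):ℝ)*x^(i+1))
              ≤ (∑ i ∈ Finset.range (n+1), (α i:ℝ)*x^(i+1)) - x^(n+1) := by
            rw [Finset.sum_range_succ, Finset.sum_range_succ, hcong]
            have h4 : (α (n+j):ℝ) * x^(n+1) ≤ ((α n:ℝ) - 1) * x^(n+1) :=
              mul_le_mul_of_nonneg_right hle hxp1
            nlinarith
          have htailb := ih (n+1+j) (by omega)
          have hS := hSle (n+1)
          have hxk : x^(n+1+k) ≤ x^(k+1) :=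
            pow_le_pow_of_le_one hxpos.le hxlt1.le (by omega)
          have t1 : x^(n+1) * (∑' i, (α (i+(n+1+j)):ℝ)*x^(i+1))
              ≤ x^(n+1) * (1 + C * x^k) := mul_le_mul_of_nonneg_left htailb hxp1
          have t2 : x^(n+1) * (1 + C*x^k) = x^(n+1) + C * x^(n+1+k) := by
            rw [pow_add]
            ring
          have t3 : C * x^(n+1+k) ≤ C * x^(k+1) := mul_le_mul_of_nonneg_left hxk hC0
          rw [h1]
          linarith
        · have hfun : ∀ i, α (i+j) = α i := fun i => congrFun h i
          have h1 : (∑' i, (α (i+j):ℝ)*x^(i+1)) = 1 := by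
            rw [tsum_congr (fun i => by rw [hfun i])]
            exact hgx
          have h2 : 0 ≤ C * x^(k+1) := mul_nonneg hC0 (by positivity)
          linarith
    have hGle1 : ∀ j, 1 ≤ j → (∑' i, (α (i+j):ℝ)*x^(i+1)) ≤ 1 := by
      intro j hj
      have ht : Tendsto (fun k : ℕ => 1 + C * x^k) atTop (nhds 1) := by
        have h1 := (tendsto_pow_atTop_nhds_zero_of_lt_one hxpos.le hxlt1).const_mul C
        have h2 := tendsto_const_nhds (x := (1:ℝ)) (f := atTop (α := ℕ)) |>.add h1
        simpa using h2
      exact ge_of_tendsto' ht (fun k => key k j hj)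
    refine ⟨x⁻¹, hq1, ?_⟩
    intro n
    have hxinv : ∀ (c:ℝ) (i:ℕ), c / (x⁻¹)^(i+1) = c * x^(i+1) := by
      intro c i
      rw [inv_pow, div_eq_mul_inv, inv_inv]
    constructor
    · show (∑ i ∈ Finset.range n, (α i:ℝ)/(x⁻¹)^(i+1)) + (α n:ℝ)/(x⁻¹)^(n+1) < 1
      simp only [hxinv]
      have h2 := hone (n+1)
      rw [Finset.sum_range_succ] at h2
      obtain ⟨m, hm, hmne⟩ := hinf (n+1)
      have hαm : (1:ℝ) ≤ (α m:ℝ) := by exact_mod_cast Nat.one_le_iff_ne_zero.2 hmne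
      have hpos : (α m:ℝ) * x^((m - (n+1))+1) ≤ ∑' i, (α (i+(n+1)):ℝ)*x^(i+1) := by
        have h3 := Summable.le_tsum (hsumG (n+1)) (m - (n+1)) (fun j _ => by positivity)
        rwa [show m - (n+1) + (n+1) = m from by omega] at h3
      have hterm : (0:ℝ) < (α m:ℝ) * x^((m-(n+1))+1) :=
        mul_pos (by linarith) (pow_pos hxpos _)
      have htp : 0 < x^(n+1) * (∑' i, (α (i+(n+1)):ℝ)*x^(i+1)) :=
        mul_pos (pow_pos hxpos _) (lt_of_lt_of_le hterm hpos)
      linarith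
    · intro k hk
      have hk' : (∑ i ∈ Finset.range n, (α i:ℝ)*x^(i+1)) + (k:ℝ) * x^(n+1) < 1 := by
        have := hk
        simp only [Set.mem_setOf_eq, hxinv] at this
        exact this
      have h2 := hone (n+1)
      rw [Finset.sum_range_succ] at h2
      have h3 := hGle1 (n+1) (by omega)
      have hxp : (0:ℝ) < x^(n+1) := pow_pos hxpos _
      have h4 : x^(n+1) * (∑' i, (α (i+(n+1)):ℝ)*x^(i+1)) ≤ x^(n+1) :=
        mul_le_of_le_one_right hxp.le h3
      have h5 : (k:ℝ) * x^(n+1) < ((α n:ℝ)+1) * x^(n+1) := by nlinarith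
      have h6 : (k:ℝ) < (α n:ℝ)+1 := lt_of_mul_lt_mul_right h5 hxp.le
      have h7 : k < α n + 1 := by exact_mod_cast h6
      omega
end

section
/- For a real number q > 1, the greedy q-expansion has only finitely many nonzero terms if and only if the quasi-greedy q-expansion is periodic (i.e., there exists k ≥ 1 with α_{i+k} = α_i for all i ≥ 1). -/
/-!
Write `r n = 1 - ∑_{i<n} c i / q^(i+1)` for the remainder after `n` digits. The greedy digits
are characterised by `0 ≤ r (n+1) < q^{-(n+1)}`, the quasi-greedy ones by `0 < r n ≤ q^{-n}`.
Hence `γ` is finite iff some `r m` vanishes; lowering the last nonzero digit of `γ` by one gives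
a prefix of `α` with `r m = q^{-m}`, and conversely raising the last digit of the shortest such
prefix of `α` gives a finite greedy expansion. Finally, `r m = q^{-m}` says that the shifted
sequence `i ↦ α (i + m)` satisfies the quasi-greedy bounds again, so it is `α`; and for a
`k`-periodic `α` the identity `r (k + n) = r k - q^{-k} + q^{-k} r n` with `r (k + n) > 0` for
all `n` forces `r k = q^{-k}`.
-/

noncomputable def partialSum (q : ℝ) (c : ℕ → ℕ) (n : ℕ) : ℝ :=
  ∑ i ∈ Finset.range n, (c i : ℝ) / q ^ (i + 1)

def GreedyBound (q : ℝ) (c : ℕ → ℕ) (n : ℕ) : Prop :=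
  partialSum q c n ≤ 1 ∧ 1 < partialSum q c n + (q ^ n)⁻¹

def QuasiGreedyBound (q : ℝ) (c : ℕ → ℕ) (n : ℕ) : Prop :=
  partialSum q c n < 1 ∧ 1 ≤ partialSum q c n + (q ^ n)⁻¹

section

variable {q : ℝ} {γ α : ℕ → ℕ}

@[simp]
theorem partialSum_zero (c : ℕ → ℕ) : partialSum q c 0 = 0 := by simp [partialSum]

theorem partialSum_succ (c : ℕ → ℕ) (n : ℕ) :
    partialSum q c (n + 1) = partialSum q c n + (c n : ℝ) / q ^ (n + 1) :=
  Finset.sum_range_succ _ _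

theorem partialSum_congr {c d : ℕ → ℕ} {n : ℕ} (h : ∀ i < n, c i = d i) :
    partialSum q c n = partialSum q d n :=
  Finset.sum_congr rfl fun i hi => by rw [h i (Finset.mem_range.mp hi)]

theorem partialSum_update_of_le (c : ℕ → ℕ) {m n : ℕ} (h : n ≤ m) (v : ℕ) :
    partialSum q (Function.update c m v) n = partialSum q c n :=
  partialSum_congr fun i hi => Function.update_of_ne (by omega) _ _

theorem partialSum_update_succ (c : ℕ → ℕ) (m v : ℕ) :
    partialSum q (Function.update c m v) (m + 1) = partialSum q c m + (v : ℝ) / q ^ (m + 1) := by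
  rw [partialSum_succ, partialSum_update_of_le c le_rfl, Function.update_self]

theorem partialSum_add (c : ℕ → ℕ) (m n : ℕ) :
    partialSum q c (m + n) =
      partialSum q c m + partialSum q (fun i => c (i + m)) n / q ^ m := by
  rw [partialSum, Finset.sum_range_add, partialSum, partialSum, Finset.sum_div]
  congr 1
  refine Finset.sum_congr rfl fun i _ => ?_
  rw [add_comm m i, div_div, ← pow_add, add_right_comm]

theorem isGreatest_add_div_le_iff {s u : ℝ} (hu : 0 < u) (k : ℕ) :
    IsGreatest {j : ℕ | s + (j : ℝ) / u ≤ 1} k ↔ s + k / u ≤ 1 ∧ 1 < s + k / u + u⁻¹ := by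
  have hstep (j : ℕ) : s + ((j + 1 : ℕ) : ℝ) / u = s + j / u + u⁻¹ := by
    push_cast; rw [add_div, one_div]; ring
  refine ⟨fun ⟨hk, hmax⟩ => ⟨hk, ?_⟩, fun ⟨hk, hnext⟩ => ⟨hk, fun j hj => ?_⟩⟩
  · by_contra! hle
    exact absurd (hmax (show s + ((k + 1 : ℕ) : ℝ) / u ≤ 1 by rwa [hstep])) (by omega)
  · by_contra! hlt
    have : s + ((k + 1 : ℕ) : ℝ) / u ≤ s + j / u := by gcongr; exact_mod_cast hlt
    rw [hstep] at this
    linarith [show s + (j : ℝ) / u ≤ 1 from hj]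

theorem isGreatest_add_div_lt_iff {s u : ℝ} (hu : 0 < u) (k : ℕ) :
    IsGreatest {j : ℕ | s + (j : ℝ) / u < 1} k ↔ s + k / u < 1 ∧ 1 ≤ s + k / u + u⁻¹ := by
  have hstep (j : ℕ) : s + ((j + 1 : ℕ) : ℝ) / u = s + j / u + u⁻¹ := by
    push_cast; rw [add_div, one_div]; ring
  refine ⟨fun ⟨hk, hmax⟩ => ⟨hk, ?_⟩, fun ⟨hk, hnext⟩ => ⟨hk, fun j hj => ?_⟩⟩
  · by_contra! hle
    exact absurd (hmax (show s + ((k + 1 : ℕ) : ℝ) / u < 1 by rwa [hstep])) (by omega)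
  · by_contra! hlt
    have : s + ((k + 1 : ℕ) : ℝ) / u ≤ s + j / u := by gcongr; exact_mod_cast hlt
    rw [hstep] at this
    linarith [show s + (j : ℝ) / u < 1 from hj]

theorem IsGreedy.greedyBound (hq : 0 < q) (hγ : IsGreedy q γ) (n : ℕ) :
    GreedyBound q γ (n + 1) := by
  rw [GreedyBound, partialSum_succ]
  exact (isGreatest_add_div_le_iff (pow_pos hq _) _).mp (hγ n)

theorem IsQuasiGreedy.quasiGreedyBound (hq : 0 < q) (hα : IsQuasiGreedy q α) :
    ∀ n, QuasiGreedyBound q α n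
  | 0 => by simp [QuasiGreedyBound]
  | n + 1 => by
    rw [QuasiGreedyBound, partialSum_succ]
    exact (isGreatest_add_div_lt_iff (pow_pos hq _) _).mp (hα n)

theorem IsGreedy.partialSum_le_one (hq : 0 < q) (hγ : IsGreedy q γ) :
    ∀ n, partialSum q γ n ≤ 1
  | 0 => by simp
  | n + 1 => (IsGreedy.greedyBound hq hγ n).1

theorem IsGreedy.apply_eq_of_greedyBound (hq : 0 < q) (hγ : IsGreedy q γ) {c : ℕ → ℕ} {n : ℕ}
    (hc : ∀ j < n, GreedyBound q c (j + 1)) : ∀ i < n, γ i = c i := by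
  induction n with
  | zero => intro i hi; omega
  | succ n ih =>
    have hpre := ih fun j hj => hc j (by omega)
    intro i hi
    rcases (Nat.lt_succ_iff.mp hi).lt_or_eq with hi | rfl
    · exact hpre i hi
    have hdigit : IsGreatest {k : ℕ | partialSum q c i + (k : ℝ) / q ^ (i + 1) ≤ 1} (γ i) := by
      rw [← partialSum_congr hpre]; exact hγ i
    have hci := hc i (by omega)
    rw [GreedyBound, partialSum_succ] at hci
    exact hdigit.unique ((isGreatest_add_div_le_iff (pow_pos hq _) _).mpr hci)

theorem IsQuasiGreedy.apply_eq_of_quasiGreedyBound (hq : 0 < q) (hα : IsQuasiGreedy q α)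
    {c : ℕ → ℕ} {n : ℕ} (hc : ∀ j < n, QuasiGreedyBound q c (j + 1)) : ∀ i < n, α i = c i := by
  induction n with
  | zero => intro i hi; omega
  | succ n ih =>
    have hpre := ih fun j hj => hc j (by omega)
    intro i hi
    rcases (Nat.lt_succ_iff.mp hi).lt_or_eq with hi | rfl
    · exact hpre i hi
    have hdigit : IsGreatest {k : ℕ | partialSum q c i + (k : ℝ) / q ^ (i + 1) < 1} (α i) := by
      rw [← partialSum_congr hpre]; exact hα i
    have hci := hc i (by omega)
    rw [QuasiGreedyBound, partialSum_succ] at hci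
    exact hdigit.unique ((isGreatest_add_div_lt_iff (pow_pos hq _) _).mpr hci)

theorem nonpos_of_le_inv_pow (hq : 1 < q) {x : ℝ} {N : ℕ} (h : ∀ n ≥ N, x ≤ (q ^ n)⁻¹) :
    x ≤ 0 :=
  ge_of_tendsto (tendsto_inv_atTop_zero.comp (tendsto_pow_atTop_atTop_of_one_lt hq))
    (Filter.eventually_atTop.mpr ⟨N, h⟩)

theorem IsGreedy.finite_iff_exists_partialSum_eq_one (hq : 1 < q) (hγ : IsGreedy q γ) :
    (∃ N, ∀ n ≥ N, γ n = 0) ↔ ∃ m, partialSum q γ m = 1 := by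
  have hq0 : 0 < q := one_pos.trans hq
  constructor
  · rintro ⟨N, hN⟩
    have hconst : ∀ n ≥ N, partialSum q γ n = partialSum q γ N := by
      intro n hn
      induction n, hn using Nat.le_induction with
      | base => rfl
      | succ n hn ih => rw [partialSum_succ, hN n hn, ih, Nat.cast_zero, zero_div, add_zero]
    refine ⟨N, le_antisymm (IsGreedy.partialSum_le_one hq0 hγ N) ?_⟩
    suffices 1 - partialSum q γ N ≤ 0 by linarith
    refine nonpos_of_le_inv_pow hq (N := N + 1) fun n hn => ?_
    obtain ⟨k, rfl⟩ : ∃ k, n = k + 1 := ⟨n - 1, by omega⟩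
    have := (IsGreedy.greedyBound hq0 hγ k).2
    rw [hconst (k + 1) (by omega)] at this
    linarith
  · rintro ⟨m, hm⟩
    have hone : ∀ n ≥ m, partialSum q γ n = 1 := by
      intro n hn
      induction n, hn using Nat.le_induction with
      | base => exact hm
      | succ n hn ih =>
        refine le_antisymm (IsGreedy.partialSum_le_one hq0 hγ _) ?_
        rw [partialSum_succ, ih]
        have : (0 : ℝ) ≤ γ n / q ^ (n + 1) := by positivity
        linarith
    refine ⟨m, fun n hn => ?_⟩
    have hdigit := partialSum_succ (q := q) γ n
    rw [hone n hn, hone (n + 1) (by omega), left_eq_add, div_eq_zero_iff] at hdigit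
    exact_mod_cast hdigit.resolve_right (pow_pos hq0 _).ne'

theorem IsQuasiGreedy.apply_add_eq_of_partialSum_add_eq_one (hq : 0 < q)
    (hα : IsQuasiGreedy q α) {m : ℕ} (hm : partialSum q α m + (q ^ m)⁻¹ = 1) (i : ℕ) :
    α (i + m) = α i := by
  have hqm : 0 < q ^ m := pow_pos hq m
  have hshift (n : ℕ) :
      1 - partialSum q (fun i => α (i + m)) n = q ^ m * (1 - partialSum q α (m + n)) := by
    rw [partialSum_add, eq_sub_of_add_eq hm]
    field_simp
    ring
  refine (IsQuasiGreedy.apply_eq_of_quasiGreedyBound hq hα (c := fun i => α (i + m))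
    (n := i + 1) (fun j _ => ?_) i (lt_add_one i)).symm
  obtain ⟨hlt, hle⟩ := IsQuasiGreedy.quasiGreedyBound hq hα (m + (j + 1))
  have hinv : q ^ m * (q ^ (m + (j + 1)))⁻¹ = (q ^ (j + 1))⁻¹ := by
    rw [pow_add]; field_simp
  rw [QuasiGreedyBound]
  constructor
  · have : 0 < q ^ m * (1 - partialSum q α (m + (j + 1))) := mul_pos hqm (by linarith)
    linarith [hshift (j + 1)]
  · have : q ^ m * (1 - partialSum q α (m + (j + 1))) ≤ q ^ m * (q ^ (m + (j + 1)))⁻¹ :=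
      mul_le_mul_of_nonneg_left (by linarith) hqm.le
    linarith [hshift (j + 1)]

theorem IsQuasiGreedy.partialSum_add_eq_one_of_periodic (hq : 1 < q) (hα : IsQuasiGreedy q α)
    {k : ℕ} (hper : ∀ i, α (i + k) = α i) : partialSum q α k + (q ^ k)⁻¹ = 1 := by
  have hq0 : 0 < q := one_pos.trans hq
  have hbound := IsQuasiGreedy.quasiGreedyBound hq0 hα
  have hshift (n : ℕ) : partialSum q α (k + n) = partialSum q α k + partialSum q α n / q ^ k := by
    simpa only [hper] using partialSum_add α k n
  refine le_antisymm ?_ (hbound k).2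
  suffices partialSum q α k + (q ^ k)⁻¹ - 1 ≤ 0 by linarith
  refine nonpos_of_le_inv_pow hq (N := 0) fun n _ => ?_
  have h1 := (hbound (k + n)).1
  rw [hshift] at h1
  calc partialSum q α k + (q ^ k)⁻¹ - 1
      = (partialSum q α k + partialSum q α n / q ^ k - 1) + (1 - partialSum q α n) / q ^ k := by
        ring
    _ ≤ 0 + (q ^ n)⁻¹ / q ^ k := by
        gcongr
        · linarith
        · linarith [(hbound n).2]
    _ ≤ (q ^ n)⁻¹ := by
        rw [zero_add]
        exact div_le_self (by positivity) (one_le_pow₀ hq.le)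

theorem IsQuasiGreedy.exists_partialSum_add_eq_one_iff_periodic (hq : 1 < q)
    (hα : IsQuasiGreedy q α) :
    (∃ m, partialSum q α (m + 1) + (q ^ (m + 1))⁻¹ = 1) ↔
      ∃ k, 1 ≤ k ∧ ∀ i, α (i + k) = α i := by
  constructor
  · rintro ⟨m, hm⟩
    exact ⟨m + 1, by omega,
      IsQuasiGreedy.apply_add_eq_of_partialSum_add_eq_one (one_pos.trans hq) hα hm⟩
  · rintro ⟨k, hk, hper⟩
    obtain ⟨m, rfl⟩ : ∃ m, k = m + 1 := ⟨k - 1, by omega⟩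
    exact ⟨m, IsQuasiGreedy.partialSum_add_eq_one_of_periodic hq hα hper⟩

theorem IsQuasiGreedy.exists_partialSum_add_eq_one_of_greedy (hq : 0 < q)
    (hγ : IsGreedy q γ) (hα : IsQuasiGreedy q α) (h : ∃ m, partialSum q γ m = 1) :
    ∃ m, partialSum q α (m + 1) + (q ^ (m + 1))⁻¹ = 1 := by
  classical
  have hlt : ∀ j < Nat.find h, partialSum q γ j < 1 := fun j hj =>
    (IsGreedy.partialSum_le_one hq hγ j).lt_of_ne (Nat.find_min h hj)
  have hfirst := Nat.find_spec h
  obtain ⟨m, hm⟩ : ∃ m, Nat.find h = m + 1 :=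
    Nat.exists_eq_succ_of_ne_zero fun h0 => by simp [h0] at hfirst
  rw [hm] at hlt hfirst
  have hγm : 1 ≤ γ m := by
    by_contra! h0
    rw [partialSum_succ, Nat.lt_one_iff.mp h0, Nat.cast_zero, zero_div, add_zero] at hfirst
    linarith [hlt m (by omega)]
  set c := Function.update γ m (γ m - 1)
  have hcm : partialSum q c (m + 1) = 1 - (q ^ (m + 1))⁻¹ := by
    rw [partialSum_update_succ, Nat.cast_sub hγm, ← hfirst, partialSum_succ]
    push_cast
    ring
  have hc : ∀ j < m + 1, QuasiGreedyBound q c (j + 1) := by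
    intro j hj
    rcases (Nat.lt_succ_iff.mp hj).lt_or_eq with hj | rfl
    · rw [QuasiGreedyBound, partialSum_update_of_le γ (by omega)]
      exact ⟨hlt (j + 1) (by omega), (IsGreedy.greedyBound hq hγ j).2.le⟩
    · rw [QuasiGreedyBound, hcm]
      exact ⟨by linarith [inv_pos.mpr (pow_pos hq (j + 1))], by linarith⟩
  refine ⟨m, ?_⟩
  rw [partialSum_congr (IsQuasiGreedy.apply_eq_of_quasiGreedyBound hq hα hc), hcm]
  ring

theorem IsGreedy.exists_partialSum_eq_one_of_quasiGreedy (hq : 0 < q)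
    (hγ : IsGreedy q γ) (hα : IsQuasiGreedy q α)
    (h : ∃ m, partialSum q α (m + 1) + (q ^ (m + 1))⁻¹ = 1) : ∃ m, partialSum q γ m = 1 := by
  classical
  set m := Nat.find h
  have hm := Nat.find_spec h
  set c := Function.update α m (α m + 1)
  have hcm : partialSum q c (m + 1) = 1 := by
    rw [partialSum_update_succ, ← hm, partialSum_succ]
    push_cast
    ring
  have hc : ∀ j < m + 1, GreedyBound q c (j + 1) := by
    intro j hj
    rcases (Nat.lt_succ_iff.mp hj).lt_or_eq with hj | rfl
    · rw [GreedyBound, partialSum_update_of_le α (by omega)]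
      obtain ⟨hlt, hle⟩ := IsQuasiGreedy.quasiGreedyBound hq hα (j + 1)
      exact ⟨hlt.le, hle.lt_of_ne (Ne.symm (Nat.find_min h hj))⟩
    · rw [GreedyBound, hcm]
      exact ⟨le_rfl, lt_add_of_pos_right 1 (inv_pos.mpr (pow_pos hq _))⟩
  exact ⟨m + 1, by rw [partialSum_congr (IsGreedy.apply_eq_of_greedyBound hq hγ hc), hcm]⟩

theorem IsGreedy.exists_partialSum_eq_one_iff (hq : 0 < q) (hγ : IsGreedy q γ)
    (hα : IsQuasiGreedy q α) :
    (∃ m, partialSum q γ m = 1) ↔ ∃ m, partialSum q α (m + 1) + (q ^ (m + 1))⁻¹ = 1 :=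
  ⟨IsQuasiGreedy.exists_partialSum_add_eq_one_of_greedy hq hγ hα,
    IsGreedy.exists_partialSum_eq_one_of_quasiGreedy hq hγ hα⟩

end

/-- For `q > 1`, the greedy `q`-expansion is finite iff the quasi-greedy
`q`-expansion is periodic. -/
theorem greedy_finite_iff_quasiGreedy_periodic (q : ℝ) (hq : 1 < q)
    (γ α : ℕ → ℕ) (hγ : IsGreedy q γ) (hα : IsQuasiGreedy q α) :
    (∃ N : ℕ, ∀ n ≥ N, γ n = 0) ↔ (∃ k : ℕ, 1 ≤ k ∧ ∀ i, α (i + k) = α i) :=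
  calc (∃ N : ℕ, ∀ n ≥ N, γ n = 0)
      ↔ ∃ m, partialSum q γ m = 1 := IsGreedy.finite_iff_exists_partialSum_eq_one hq hγ
    _ ↔ ∃ m, partialSum q α (m + 1) + (q ^ (m + 1))⁻¹ = 1 :=
      IsGreedy.exists_partialSum_eq_one_iff (one_pos.trans hq) hγ hα
    _ ↔ ∃ k : ℕ, 1 ≤ k ∧ ∀ i, α (i + k) = α i :=
      IsQuasiGreedy.exists_partialSum_add_eq_one_iff_periodic hq hα
end

section
/- Let q > 1 and suppose the greedy q-expansion (γ_i) has only finitely many nonzero terms, with γ_m its last nonzero term. Then m is the smallest period of the quasi-greedy q-expansion (α_i), and α_i = γ_i for i = 1, …, m−1, while α_m = γ_m − 1. -/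
/-!
Track the normalized remainder `r n = q ^ n * (1 - ∑_{i<n} c_i q^{-(i+1)})`, which obeys
`r (n+1) = q * r n - c n` with `r 0 = 1`. The greedy digit is the largest integer `≤ q * r n`, the
quasi-greedy one the largest integer `< q * r n`, so the two expansions agree as long as `q * r n`
is not an integer. For a finite greedy expansion this first happens at its last nonzero digit `γ_m`,
where `q * r m = γ_m`: there the quasi-greedy expansion picks `γ_m - 1` and its remainder returns
to `1 = r 0`, after which it repeats. Conversely, the quasi-greedy expansion is `p`-periodic exactly
when its remainder returns to `1` after `p` digits, whereas greedy remainders stay below `1`.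
-/

def expansionRemainder (q : ℝ) (c : ℕ → ℕ) : ℕ → ℝ
  | 0 => 1
  | n + 1 => q * expansionRemainder q c n - c n

section Remainder

variable {q : ℝ} {c d : ℕ → ℕ} {n : ℕ}

@[simp]
lemma expansionRemainder_zero : expansionRemainder q c 0 = 1 := rfl

@[simp]
lemma expansionRemainder_succ :
    expansionRemainder q c (n + 1) = q * expansionRemainder q c n - c n := rfl

lemma expansionRemainder_eq (hq : q ≠ 0) (c : ℕ → ℕ) (n : ℕ) :
    expansionRemainder q c n = q ^ n * (1 - ∑ i ∈ Finset.range n, (c i : ℝ) / q ^ (i + 1)) := by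
  induction n with
  | zero => simp
  | succ n ih =>
    rw [expansionRemainder_succ, ih, Finset.sum_range_succ]
    field_simp
    ring

lemma expansionRemainder_congr (h : ∀ i < n, c i = d i) :
    expansionRemainder q c n = expansionRemainder q d n := by
  induction n with
  | zero => rfl
  | succ n ih =>
    simp only [expansionRemainder_succ, ih fun i hi ↦ h i (by omega), h n n.lt_succ_self]

lemma expansionRemainder_add_sub_of_periodic {p : ℕ} (hc : Function.Periodic c p) (n : ℕ) :
    expansionRemainder q c (n + p) - expansionRemainder q c n =
      q ^ n * (expansionRemainder q c p - 1) := by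
  induction n with
  | zero => simp
  | succ n ih =>
    rw [Nat.add_right_comm, expansionRemainder_succ, expansionRemainder_succ, hc n, pow_succ']
    linear_combination q * ih

lemma sum_add_div_lt_one_iff (hq : 0 < q) (x : ℝ) :
    (∑ i ∈ Finset.range n, (c i : ℝ) / q ^ (i + 1)) + x / q ^ (n + 1) < 1 ↔
      x < q * expansionRemainder q c n := by
  rw [expansionRemainder_eq hq.ne', ← mul_assoc, ← pow_succ', ← lt_sub_iff_add_lt',
    div_lt_iff₀' (by positivity)]

lemma sum_add_div_le_one_iff (hq : 0 < q) (x : ℝ) :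
    (∑ i ∈ Finset.range n, (c i : ℝ) / q ^ (i + 1)) + x / q ^ (n + 1) ≤ 1 ↔
      x ≤ q * expansionRemainder q c n := by
  rw [expansionRemainder_eq hq.ne', ← mul_assoc, ← pow_succ', ← le_sub_iff_add_le',
    div_le_iff₀' (by positivity)]

end Remainder

lemma lt_add_one_of_isGreatest_natCast_le {x : ℝ} {a : ℕ}
    (h : IsGreatest {k : ℕ | (k : ℝ) ≤ x} a) : x < a + 1 := by
  by_contra! hx
  have := h.2 (show a + 1 ∈ {k : ℕ | (k : ℝ) ≤ x} by simpa using hx)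
  omega

lemma le_add_one_of_isGreatest_natCast_lt {x : ℝ} {a : ℕ}
    (h : IsGreatest {k : ℕ | (k : ℝ) < x} a) : x ≤ a + 1 := by
  by_contra! hx
  have := h.2 (show a + 1 ∈ {k : ℕ | (k : ℝ) < x} by simpa using hx)
  omega

lemma eq_zero_of_forall_pow_mul_le {q x C : ℝ} (hq : 1 < q) (hx : 0 ≤ x)
    (h : ∀ n : ℕ, q ^ n * x ≤ C) : x = 0 := by
  refine hx.antisymm' (not_lt.1 fun hx ↦ ?_)
  obtain ⟨n, hn⟩ := pow_unbounded_of_one_lt (C / x) hq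
  exact (h n).not_gt ((div_lt_iff₀ hx).1 hn)

namespace IsGreedy

variable {q : ℝ} {γ : ℕ → ℕ}

lemma isGreatest_le_mul_expansionRemainder (hq : 0 < q) (hγ : IsGreedy q γ) (n : ℕ) :
    IsGreatest {k : ℕ | (k : ℝ) ≤ q * expansionRemainder q γ n} (γ n) := by
  simpa only [sum_add_div_le_one_iff hq] using hγ n

lemma expansionRemainder_nonneg (hq : 0 < q) (hγ : IsGreedy q γ) (n : ℕ) :
    0 ≤ expansionRemainder q γ n := by
  cases n with
  | zero => simp
  | succ n =>
    rw [expansionRemainder_succ, sub_nonneg]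
    exact (hγ.isGreatest_le_mul_expansionRemainder hq n).1

lemma expansionRemainder_lt_one (hq : 0 < q) (hγ : IsGreedy q γ) {n : ℕ} (hn : n ≠ 0) :
    expansionRemainder q γ n < 1 := by
  obtain ⟨n, rfl⟩ := Nat.exists_eq_succ_of_ne_zero hn
  rw [expansionRemainder_succ, sub_lt_iff_lt_add']
  exact lt_add_one_of_isGreatest_natCast_le (hγ.isGreatest_le_mul_expansionRemainder hq n)

lemma expansionRemainder_le_one (hq : 0 < q) (hγ : IsGreedy q γ) (n : ℕ) :
    expansionRemainder q γ n ≤ 1 := by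
  rcases eq_or_ne n 0 with rfl | hn
  · simp
  · exact (hγ.expansionRemainder_lt_one hq hn).le

/-- Once the digits vanish the remainder is multiplied by `q` at each step; as it stays in `[0, 1]`,
it must be `0`. -/
lemma expansionRemainder_eq_zero_of_forall_gt (hq : 1 < q) (hγ : IsGreedy q γ) {m : ℕ}
    (hm : ∀ n > m, γ n = 0) : expansionRemainder q γ (m + 1) = 0 := by
  have hq0 : 0 < q := zero_lt_one.trans hq
  have hgrow :
      ∀ j, expansionRemainder q γ (m + 1 + j) = q ^ j * expansionRemainder q γ (m + 1) := by
    intro j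
    induction j with
    | zero => simp
    | succ j ih =>
      rw [← add_assoc, expansionRemainder_succ, ih, hm _ (by omega), pow_succ']
      push_cast
      ring
  refine eq_zero_of_forall_pow_mul_le hq (hγ.expansionRemainder_nonneg hq0 _) (C := 1) fun j ↦ ?_
  rw [← hgrow]
  exact hγ.expansionRemainder_le_one hq0 _

end IsGreedy

namespace IsQuasiGreedy

variable {q : ℝ} {α : ℕ → ℕ}

lemma isGreatest_lt_mul_expansionRemainder (hq : 0 < q) (hα : IsQuasiGreedy q α) (n : ℕ) :
    IsGreatest {k : ℕ | (k : ℝ) < q * expansionRemainder q α n} (α n) := by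
  simpa only [sum_add_div_lt_one_iff hq] using hα n

lemma expansionRemainder_pos (hq : 0 < q) (hα : IsQuasiGreedy q α) (n : ℕ) :
    0 < expansionRemainder q α n := by
  cases n with
  | zero => simp
  | succ n =>
    rw [expansionRemainder_succ, sub_pos]
    exact (hα.isGreatest_lt_mul_expansionRemainder hq n).1

lemma expansionRemainder_le_one (hq : 0 < q) (hα : IsQuasiGreedy q α) (n : ℕ) :
    expansionRemainder q α n ≤ 1 := by
  cases n with
  | zero => simp
  | succ n =>
    rw [expansionRemainder_succ, sub_le_iff_le_add']
    exact le_add_one_of_isGreatest_natCast_lt (hα.isGreatest_lt_mul_expansionRemainder hq n)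

lemma eq_of_expansionRemainder_eq (hq : 0 < q) (hα : IsQuasiGreedy q α) {i j : ℕ}
    (h : expansionRemainder q α i = expansionRemainder q α j) : α i = α j :=
  (hα.isGreatest_lt_mul_expansionRemainder hq i).unique
    (h ▸ hα.isGreatest_lt_mul_expansionRemainder hq j)

lemma add_one_eq_of_mul_expansionRemainder_eq (hq : 0 < q) (hα : IsQuasiGreedy q α) {n d : ℕ}
    (h : q * expansionRemainder q α n = d) : α n + 1 = d := by
  have hlt := (hα.isGreatest_lt_mul_expansionRemainder hq n).1
  have hle := le_add_one_of_isGreatest_natCast_lt (hα.isGreatest_lt_mul_expansionRemainder hq n)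
  rw [Set.mem_ofPred_eq, h] at hlt
  rw [h] at hle
  have : α n < d := by exact_mod_cast hlt
  have : d ≤ α n + 1 := by exact_mod_cast hle
  omega

lemma periodic_iff (hq : 1 < q) (hα : IsQuasiGreedy q α) {p : ℕ} :
    Function.Periodic α p ↔ expansionRemainder q α p = 1 := by
  have hq0 : 0 < q := zero_lt_one.trans hq
  constructor
  · intro hper
    refine (sub_eq_zero.1 (eq_zero_of_forall_pow_mul_le hq
      (sub_nonneg.2 (hα.expansionRemainder_le_one hq0 p)) (C := 1) fun n ↦ ?_)).symm
    have h := expansionRemainder_add_sub_of_periodic (q := q) hper n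
    linarith [hα.expansionRemainder_pos hq0 (n + p), hα.expansionRemainder_le_one hq0 n]
  · intro hp
    have hshift : ∀ n, expansionRemainder q α (n + p) = expansionRemainder q α n := by
      intro n
      induction n with
      | zero => simpa using hp
      | succ n ih =>
        rw [Nat.add_right_comm, expansionRemainder_succ, expansionRemainder_succ, ih,
          hα.eq_of_expansionRemainder_eq hq0 ih]
    exact fun n ↦ hα.eq_of_expansionRemainder_eq hq0 (hshift n)

/-- The two expansions can only part ways at a digit after which the greedy remainder is `0`. -/
lemma eq_of_isGreedy (hq : 0 < q) (hα : IsQuasiGreedy q α) {γ : ℕ → ℕ} (hγ : IsGreedy q γ)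
    {n : ℕ} (hpos : 0 < expansionRemainder q γ n) : ∀ i < n, α i = γ i := by
  induction n with
  | zero => simp
  | succ n ih =>
    rw [expansionRemainder_succ, sub_pos] at hpos
    have hprev : ∀ i < n, α i = γ i :=
      ih (pos_of_mul_pos_right (hpos.trans_le' (by positivity)) hq.le)
    have hγn := hγ.isGreatest_le_mul_expansionRemainder hq n
    have hαn := hα.isGreatest_lt_mul_expansionRemainder hq n
    rw [← expansionRemainder_congr hprev] at hpos hγn
    have h1 : γ n ≤ α n := hαn.2 hpos
    have h2 : α n ≤ γ n := hγn.2 (Set.mem_ofPred.2 hαn.1.le)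
    intro i hi
    rcases Nat.lt_succ_iff_lt_or_eq.1 hi with hi | rfl
    · exact hprev i hi
    · omega

end IsQuasiGreedy

/-- If the greedy `q`-expansion is finite with last nonzero digit `γ_m`
(0-indexed: digit at index `m`, so the paper's index is `m+1`), then `m+1`
is the smallest period of the quasi-greedy `q`-expansion `(α_i)`,
`α_i = γ_i` for the first `m` digits and the next digit satisfies
`α_m = γ_m - 1`. -/
theorem quasiGreedy_of_finite_greedy (q : ℝ) (hq : 1 < q)
    (γ α : ℕ → ℕ) (hγ : IsGreedy q γ) (hα : IsQuasiGreedy q α)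
    (m : ℕ) (hm : γ m ≠ 0) (hm' : ∀ n > m, γ n = 0) :
    IsLeast {k : ℕ | 1 ≤ k ∧ ∀ i, α (i + k) = α i} (m + 1) ∧
      (∀ i < m, α i = γ i) ∧ α m = γ m - 1 := by
  have hq0 : 0 < q := zero_lt_one.trans hq
  have hγm : q * expansionRemainder q γ m = γ m := by
    simpa [sub_eq_zero] using hγ.expansionRemainder_eq_zero_of_forall_gt hq hm'
  have hagree : ∀ i < m, α i = γ i := by
    refine hα.eq_of_isGreedy hq0 hγ (pos_of_mul_pos_right (a := q) ?_ hq0.le)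
    rw [hγm]
    exact_mod_cast Nat.pos_of_ne_zero hm
  have hrem : expansionRemainder q α m = expansionRemainder q γ m :=
    expansionRemainder_congr hagree
  have hαm : α m + 1 = γ m := hα.add_one_eq_of_mul_expansionRemainder_eq hq0 (hrem ▸ hγm)
  have hreturn : expansionRemainder q α (m + 1) = 1 := by
    rw [expansionRemainder_succ, hrem, hγm, ← hαm]
    push_cast
    ring
  refine ⟨⟨⟨by omega, (hα.periodic_iff hq).2 hreturn⟩, ?_⟩, hagree, by omega⟩
  rintro k ⟨hk, hkper⟩
  by_contra! hkm
  have hlt := hγ.expansionRemainder_lt_one hq0 (n := k) (by omega)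
  rw [← expansionRemainder_congr fun i hi ↦ hagree i (by omega), (hα.periodic_iff hq).1 hkper]
    at hlt
  exact lt_irrefl _ hlt
end
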